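/- arXiv:1805.04954 — 8 statements merged into one kernel-verified Lean document; each statement's English description precedes it below -/
import Mathlib

section
/- Let G = (P, X, ≤, ≤*, ◁) be a Gowers space, p ∈ P, and τ a strategy for player II in Kastanas' game K_p. For every at most countable set 𝒮 of states and every r ∈ P, there exists r* ≤ r with the following property: for every state s ∈ 𝒮 and all x, y ∈ X, if there exist u, v ∈ P such that (1) player I can legally continue the play s by the move (x, u), (2) τ(s⌢(x, u)) = (y, v), and (3) v and r* are compatible, then there exist u', v' ∈ P satisfying (1), (2) and (3) and such that moreover r* ≤* v'. -/
open MeasureTheory Filter Topology TopologicalSpace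

/-! ## Basic sequence helpers -/

/-- The list `[x 0, …, x (n-1)]`. -/
def preSeq {X : Type*} (x : ℕ → X) (n : ℕ) : List X := (List.range n).map x

/-- Interleaving of two sequences: `x 0, y 0, x 1, y 1, …`. -/
def itl {X : Type*} (x y : ℕ → X) : ℕ → X := fun k => if k % 2 = 0 then x (k / 2) else y (k / 2)

/-- Outcome produced by a strategy of player II against the moves `f` of player I. -/
def gOut {Q X : Type*} (τ : List Q → X) (f : ℕ → Q) : ℕ → X :=
  fun n => τ ((List.range (n + 1)).map f)

/-! ## Gowers spaces -/

structure GowersSpace (P : Type*) (X : Type*) where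
  le : P → P → Prop
  les : P → P → Prop
  tri : List X → P → Prop
  le_refl : ∀ p, le p p
  le_trans : ∀ p q r, le p q → le q r → le p r
  les_refl : ∀ p, les p p
  les_trans : ∀ p q r, les p q → les q r → les p r
  le_imp_les : ∀ p q, le p q → les p q
  diag : ∀ p q, les p q → ∃ r, le r p ∧ le r q ∧ les p r
  decseq : ∀ f : ℕ → P, (∀ n, le (f (n + 1)) (f n)) → ∃ p, ∀ n, les p (f n)
  ext : ∀ (p : P) (s : List X), ∃ x, tri (s ++ [x]) p
  mono : ∀ (s : List X) (p q : P), tri s p → le p q → tri s q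

namespace GowersSpace

variable {P X : Type*} (G : GowersSpace P X)

/-- `q ⪅ p` : `q ≤ p` and `p ≤* q`. -/
def lap (q p : P) : Prop := G.le q p ∧ G.les p q

/-- Compatibility of two subspaces. -/
def compat (a b : P) : Prop := ∃ r, G.le r a ∧ G.le r b

/-- Player I has a strategy in the asymptotic game `F_p` to reach `Y`. -/
def IStratF (p : P) (Y : Set (ℕ → X)) : Prop :=
  ∃ σ : List X → P, (∀ s, G.lap (σ s) p) ∧
    ∀ x : ℕ → X, (∀ n, G.tri (preSeq x (n + 1)) (σ (preSeq x n))) → x ∈ Y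

/-- Player II has a strategy in Gowers' game `G_p` to reach `Y`. -/
def IIStratG (p : P) (Y : Set (ℕ → X)) : Prop :=
  ∃ τ : List P → X, ∀ f : ℕ → P, (∀ n, G.le (f n) p) →
    (∀ n, G.tri (preSeq (gOut τ f) (n + 1)) (f n)) ∧ gOut τ f ∈ Y

/-! ### Adversarial-type games (`A_p`, `B_p`, Kastanas' game `K_p`).

In all these games, player II first plays `p₀ ∈ P`; then at each turn `i` player I plays
`(x_i, q_i) ∈ X × P` and player II answers `(y_i, p_{i+1}) ∈ X × P`.  The outcome is
`(x_0, y_0, x_1, y_1, …)`. -/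

/-- Moves of player I computed from his strategy `σ` and the moves `p₀`, `g` of player II. -/
def advI (σ : P → List (X × P) → X × P) (p0 : P) (g : ℕ → X × P) (n : ℕ) : X × P :=
  σ p0 ((List.range n).map g)

/-- The sequence `p₀, p₁, p₂, …` of subspaces played by player II, extracted from `p₀` and `g`. -/
def advIIps (p0 : P) (g : ℕ → X × P) : ℕ → P :=
  fun n => Nat.rec (motive := fun _ => P) p0 (fun k _ => (g k).2) n

/-- The outcome when player I follows `σ` and player II plays `p₀`, `g`. -/
def advIOut (σ : P → List (X × P) → X × P) (p0 : P) (g : ℕ → X × P) : ℕ → X :=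
  itl (fun n => (advI σ p0 g n).1) (fun n => (g n).1)

/-- Player I has a strategy in the game `A_p` to reach `Y`. -/
def IStratA (p : P) (Y : Set (ℕ → X)) : Prop :=
  ∃ σ : P → List (X × P) → X × P,
    (∀ p0 g n, G.tri (preSeq (advIOut σ p0 g) (2 * n + 1)) (advIIps p0 g n) ∧
      G.lap (advI σ p0 g n).2 p) ∧
    ∀ p0 g, (∀ n, G.le (advIIps p0 g n) p) →
      (∀ n, G.tri (preSeq (advIOut σ p0 g) (2 * n + 2)) ((advI σ p0 g n).2)) →
      advIOut σ p0 g ∈ Y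

/-- Player I has a strategy in Kastanas' game `K_p` to reach `Y`. -/
def IStratK (p : P) (Y : Set (ℕ → X)) : Prop :=
  ∃ σ : P → List (X × P) → X × P,
    (∀ p0 g n, G.tri (preSeq (advIOut σ p0 g) (2 * n + 1)) (advIIps p0 g n) ∧
      G.le (advI σ p0 g n).2 (advIIps p0 g n)) ∧
    ∀ p0 g, G.le p0 p →
      (∀ n, G.tri (preSeq (advIOut σ p0 g) (2 * n + 2)) ((advI σ p0 g n).2) ∧
        G.le (advIIps p0 g (n + 1)) ((advI σ p0 g n).2)) →
      advIOut σ p0 g ∈ Y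

/-- Moves of player II computed from her strategy `τ` and the moves `h` of player I:
`advII τ h n = (y_n, p_{n+1})`. -/
def advII (τ : List (X × P) → X × P) (h : ℕ → X × P) (n : ℕ) : X × P :=
  τ ((List.range (n + 1)).map h)

/-- The sequence `p₀, p₁, …` played by player II following the strategy `(p₀, τ)`. -/
def advIIpsB (p0 : P) (τ : List (X × P) → X × P) (h : ℕ → X × P) : ℕ → P :=
  fun n => Nat.rec (motive := fun _ => P) p0 (fun k _ => (advII τ h k).2) n

/-- The outcome when player II follows `τ` and player I plays `h`. -/
def advIIOut (τ : List (X × P) → X × P) (h : ℕ → X × P) : ℕ → X :=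
  itl (fun n => (h n).1) (fun n => (advII τ h n).1)

/-- Player II has a strategy in the game `B_p` to reach `Y`. -/
def IIStratB (p : P) (Y : Set (ℕ → X)) : Prop :=
  ∃ (p0 : P) (τ : List (X × P) → X × P), G.lap p0 p ∧
    (∀ h n, G.tri (preSeq (advIIOut τ h) (2 * n + 2)) ((h n).2) ∧
      G.lap (advIIpsB p0 τ h (n + 1)) p) ∧
    ∀ h : ℕ → X × P,
      (∀ n, G.tri (preSeq (advIIOut τ h) (2 * n + 1)) (advIIpsB p0 τ h n) ∧ G.le ((h n).2) p) →
      advIIOut τ h ∈ Y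

/-- Player II has a strategy in Kastanas' game `K_p` to reach `Y`. -/
def IIStratK (p : P) (Y : Set (ℕ → X)) : Prop :=
  ∃ (p0 : P) (τ : List (X × P) → X × P), G.le p0 p ∧
    (∀ h n, G.tri (preSeq (advIIOut τ h) (2 * n + 2)) ((h n).2) ∧
      G.le (advIIpsB p0 τ h (n + 1)) ((h n).2)) ∧
    ∀ h : ℕ → X × P,
      (∀ n, G.tri (preSeq (advIIOut τ h) (2 * n + 1)) (advIIpsB p0 τ h n) ∧
        G.le ((h n).2) (advIIpsB p0 τ h n)) →
      advIIOut τ h ∈ Y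

/-- `(p₀, τ)` is a strategy for player II in Kastanas' game `K_p`
(it always produces legal moves). -/
def IsIIStratK (p p0 : P) (τ : List (X × P) → X × P) : Prop :=
  G.le p0 p ∧ ∀ (h : ℕ → X × P) (n : ℕ),
    G.tri (preSeq (advIIOut τ h) (2 * n + 2)) ((h n).2) ∧
      G.le (advIIpsB p0 τ h (n + 1)) ((h n).2)

/-- `h` extends the finite list `l` of moves. -/
def extFun (h : ℕ → X × P) (l : List (X × P)) : Prop := (List.range l.length).map h = l

/-- The list `l` of moves of player I determines a state (a legal partial play ending with
a move of II) when II follows the strategy `(p₀, τ)` in `K_p`. -/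
def IsStateK (p0 : P) (τ : List (X × P) → X × P) (l : List (X × P)) : Prop :=
  ∀ h : ℕ → X × P, extFun h l → ∀ k < l.length,
    G.tri (preSeq (advIIOut τ h) (2 * k + 1)) (advIIpsB p0 τ h k) ∧
      G.le ((h k).2) (advIIpsB p0 τ h k)

/-- Player I can legally continue the state determined by `l` by the move `(x, u)`. -/
def CanContinue (p0 : P) (τ : List (X × P) → X × P) (l : List (X × P)) (x : X) (u : P) : Prop :=
  ∀ h : ℕ → X × P, extFun h (l ++ [(x, u)]) →
    G.tri (preSeq (advIIOut τ h) (2 * l.length + 1)) (advIIpsB p0 τ h l.length) ∧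
      G.le u (advIIpsB p0 τ h l.length)

/-- The pigeonhole principle for a Gowers space. -/
def Pigeonhole : Prop :=
  ∀ (p : P) (s : List X) (A : Set X), ∃ q, G.le q p ∧
    ((∀ x, G.tri (s ++ [x]) q → x ∈ A) ∨ ∀ x, G.tri (s ++ [x]) q → x ∉ A)

/-- A set is strategically Ramsey. -/
def StrategicallyRamsey (Y : Set (ℕ → X)) : Prop :=
  ∀ p : P, ∃ q, G.le q p ∧ (G.IStratF q Yᶜ ∨ G.IIStratG q Y)

/-- The doubled Gowers space, over the set of points `X × Bool`. -/
def double : GowersSpace P (X × Bool) where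
  le := G.le
  les := G.les
  tri := fun s p => G.tri (s.map Prod.fst) p
  le_refl := G.le_refl
  le_trans := G.le_trans
  les_refl := G.les_refl
  les_trans := G.les_trans
  le_imp_les := G.le_imp_les
  diag := G.diag
  decseq := G.decseq
  ext := fun p s => by
    obtain ⟨x, hx⟩ := G.ext p (s.map Prod.fst)
    exact ⟨(x, true), by simpa using hx⟩
  mono := fun s p q h hle => G.mono _ p q h hle

end GowersSpace


/-!
Enumerate the countably many triples `(s, x, y)` and build a `≤`-decreasing sequence
`r = r₀ ≥ r₁ ≥ ⋯`: at step `n`, if some answer `v` of `τ` for the `n`-th triple is compatible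
with `rₙ`, let `rₙ₊₁` lie below both. A fusion `r*` of the sequence, taken below `r`, satisfies
`r* ≤* rₙ` for all `n`. An answer compatible with `r*` is then compatible with `rₙ`, so step `n`
chose some answer `v' ≥ rₙ₊₁`, whence `r* ≤* v'`.
-/

namespace GowersSpace

variable {P X : Type*} (G : GowersSpace P X)

theorem compat_of_les {p q : P} (h : G.les p q) : G.compat q p := by
  obtain ⟨r, hrp, hrq, -⟩ := G.diag p q h
  exact ⟨r, hrq, hrp⟩

theorem compat_of_compat_of_les {a b c : P} (hab : G.compat a b) (hbc : G.les b c) :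
    G.compat a c := by
  obtain ⟨w, hwa, hwb⟩ := hab
  obtain ⟨w', hw'w, hw'c, -⟩ := G.diag w c (G.les_trans _ _ _ (G.le_imp_les _ _ hwb) hbc)
  exact ⟨w', G.le_trans _ _ _ hw'w hwa, hw'c⟩

theorem exists_le_forall_les_of_decreasing (f : ℕ → P) (hf : ∀ n, G.le (f (n + 1)) (f n)) :
    ∃ q, G.le q (f 0) ∧ ∀ n, G.les q (f n) := by
  obtain ⟨p, hp⟩ := G.decseq f hf
  obtain ⟨q, hqp, hq0, -⟩ := G.diag p (f 0) (hp 0)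
  exact ⟨q, hq0, fun n => G.les_trans _ _ _ (G.le_imp_les _ _ hqp) (hp n)⟩

theorem exists_le_of_compat (q : P) (V : Set P) :
    ∃ q', G.le q' q ∧ ((∃ v ∈ V, G.compat v q) → ∃ v ∈ V, G.le q' v) := by
  by_cases h : ∃ v ∈ V, G.compat v q
  · obtain ⟨v, hv, w, hwv, hwq⟩ := h
    exact ⟨w, hwq, fun _ => ⟨v, hv, hwv⟩⟩
  · exact ⟨q, G.le_refl q, fun h' => absurd h' h⟩

theorem exists_le_forall_les_of_compat_nat (V : ℕ → Set P) (r : P) :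
    ∃ rs, G.le rs r ∧ ∀ n, (∃ v ∈ V n, G.compat v rs) → ∃ v ∈ V n, G.les rs v := by
  choose step hstep_le hstep using G.exists_le_of_compat
  let f : ℕ → P := fun n => Nat.rec r (fun k q => step q (V k)) n
  obtain ⟨rs, hrs, hrs_les⟩ :=
    G.exists_le_forall_les_of_decreasing f fun n => hstep_le (f n) (V n)
  refine ⟨rs, hrs, fun n hcompat => ?_⟩
  have hcompat_n : ∃ v ∈ V n, G.compat v (f n) := by
    obtain ⟨v, hv, hvrs⟩ := hcompat
    exact ⟨v, hv, G.compat_of_compat_of_les hvrs (hrs_les n)⟩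
  obtain ⟨v, hv, hle⟩ := hstep (f n) (V n) hcompat_n
  exact ⟨v, hv, G.les_trans _ _ _ (hrs_les (n + 1)) (G.le_imp_les _ _ hle)⟩

theorem exists_le_forall_les_of_compat {ι : Type*} [Countable ι] (V : ι → Set P) (r : P) :
    ∃ rs, G.le rs r ∧ ∀ i, (∃ v ∈ V i, G.compat v rs) → ∃ v ∈ V i, G.les rs v := by
  obtain ⟨e, he⟩ := Countable.exists_injective_nat ι
  obtain ⟨rs, hrs, h⟩ :=
    G.exists_le_forall_les_of_compat_nat (fun n => {v | ∃ i, e i = n ∧ v ∈ V i}) r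
  refine ⟨rs, hrs, fun i ⟨v, hv, hcompat⟩ => ?_⟩
  obtain ⟨v', ⟨j, hj, hv'⟩, hles⟩ := h (e i) ⟨v, ⟨i, rfl, hv⟩, hcompat⟩
  exact ⟨v', he hj ▸ hv', hles⟩

end GowersSpace

theorem stmt3_general {P X : Type} [Countable X]
    (G : GowersSpace P X) (p0 : P) (τ : List (X × P) → X × P)
    (𝒮 : Set (List (X × P))) (hcount : 𝒮.Countable)
    (r : P) :
    ∃ rs, G.le rs r ∧
      ∀ l ∈ 𝒮, ∀ (x y : X),
        (∃ u v : P, G.CanContinue p0 τ l x u ∧ τ (l ++ [(x, u)]) = (y, v) ∧ G.compat v rs) →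
        ∃ u' v' : P, G.CanContinue p0 τ l x u' ∧ τ (l ++ [(x, u')]) = (y, v') ∧
          G.compat v' rs ∧ G.les rs v' := by
  have : Countable 𝒮 := hcount.to_subtype
  let answers : 𝒮 × X × X → Set P := fun t =>
    {v | ∃ u, G.CanContinue p0 τ t.1 t.2.1 u ∧ τ (t.1 ++ [(t.2.1, u)]) = (t.2.2, v)}
  obtain ⟨rs, hrs, h⟩ := G.exists_le_forall_les_of_compat answers r
  refine ⟨rs, hrs, fun l hl x y ⟨u, v, hcont, hτ, hcompat⟩ => ?_⟩
  obtain ⟨v', ⟨u', hcont', hτ'⟩, hles⟩ := h (⟨l, hl⟩, x, y) ⟨v, ⟨u, hcont, hτ⟩, hcompat⟩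
  exact ⟨u', v', hcont', hτ', G.compat_of_les hles, hles⟩

theorem stmt3 {P X : Type} [Nonempty P] [Nonempty X] [Countable X]
    (G : GowersSpace P X) (p p0 : P) (τ : List (X × P) → X × P)
    (hτ : G.IsIIStratK p p0 τ)
    (𝒮 : Set (List (X × P))) (hcount : 𝒮.Countable)
    (hstates : ∀ l ∈ 𝒮, G.IsStateK p0 τ l)
    (r : P) :
    ∃ rs, G.le rs r ∧
      ∀ l ∈ 𝒮, ∀ (x y : X),
        (∃ u v : P, G.CanContinue p0 τ l x u ∧ τ (l ++ [(x, u)]) = (y, v) ∧ G.compat v rs) →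
        ∃ u' v' : P, G.CanContinue p0 τ l x u' ∧ τ (l ++ [(x, u')]) = (y, v') ∧
          G.compat v' rs ∧ G.les rs v' :=
  stmt3_general G p0 τ 𝒮 hcount r
end

section
/- Let G = (P, X, ≤, ≤*, ◁) be a Gowers space, and let G' = (P, X', ≤, ≤*, ◁') be the Gowers space with X' = X × {0,1} and (x_0, ε_0, …, x_n, ε_n) ◁' p if and only if (x_0, …, x_n) ◁ p. Let π : X'^ω → X^ω be the coordinatewise projection, let 𝒳' ⊆ X'^ω, let 𝒳 = π(𝒳'), and let q ∈ P. If player I has a strategy in the asymptotic game F'_q of G' to reach the complement of 𝒳', then player I has a strategy in the asymptotic game F_q of G to reach the complement of 𝒳. -/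
open MeasureTheory Filter Topology TopologicalSpace

/-!
A lift of a position `(x_0, …, x_{n-1})` of `F_q` is a position of `F'_q` with the same
projection; there are only `2^n` of them. Player I answers `s` with a common `⪅`-lower bound
of his answers to all lifts of `s` in `F'_q`, which exists since `⪅` is downward directed on
`{p | p ⪅ q}`. Then every lift of a run following this strategy follows the given one,
so no run lies in the projection of `𝒳'`.
-/

lemma List.finite_setOf_map_fst_eq {X B : Type*} [Finite B] (s : List X) :
    {s' : List (X × B) | s'.map Prod.fst = s}.Finite := by
  refine (Set.finite_range fun b : List.Vector B s.length => s.zip b.toList).subset ?_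
  rintro s' rfl
  refine ⟨⟨s'.map Prod.snd, by simp⟩, ?_⟩
  simp only [List.Vector.toList_mk, ← List.unzip_fst, ← List.unzip_snd, List.zip_unzip]

namespace GowersSpace

variable {P X : Type*} (G : GowersSpace P X)

lemma exists_lap_le_of_finite (q : P) {S : Set P} (hS : S.Finite) (hSq : ∀ p ∈ S, G.lap p q) :
    ∃ r, G.lap r q ∧ ∀ p ∈ S, G.le r p := by
  induction S, hS using Set.Finite.induction_on with
  | empty => exact ⟨q, ⟨G.le_refl q, G.les_refl q⟩, by simp⟩
  | @insert a S _ _ ih =>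
    obtain ⟨r', hr'q, hr'S⟩ := ih fun p hp => hSq p (Set.mem_insert_of_mem a hp)
    have haq : G.lap a q := hSq a (Set.mem_insert a S)
    obtain ⟨r, hra, hrr', har⟩ :=
      G.diag a r' (G.les_trans _ _ _ (G.le_imp_les _ _ haq.1) hr'q.2)
    refine ⟨r, ⟨G.le_trans _ _ _ hra haq.1, G.les_trans _ _ _ haq.2 har⟩, ?_⟩
    rintro p (rfl | hp)
    · exact hra
    · exact G.le_trans _ _ _ hrr' (hr'S p hp)

lemma exists_lap_le_over_lifts {B : Type*} [Finite B] (q : P) (σ' : List (X × B) → P)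
    (hσ' : ∀ s', G.lap (σ' s') q) :
    ∃ σ : List X → P, ∀ s, G.lap (σ s) q ∧ ∀ s', s'.map Prod.fst = s → G.le (σ s) (σ' s') := by
  choose σ hσ using fun s : List X =>
    G.exists_lap_le_of_finite q ((List.finite_setOf_map_fst_eq s).image σ')
      (by rintro _ ⟨s', -, rfl⟩; exact hσ' s')
  exact ⟨σ, fun s => ⟨(hσ s).1, fun s' hs' => (hσ s).2 _ ⟨s', hs', rfl⟩⟩⟩

end GowersSpace

theorem stmt6_general {P X : Type}
    (G : GowersSpace P X) (𝒳' : Set (ℕ → X × Bool)) (q : P)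
    (h : (G.double).IStratF q (𝒳'ᶜ)) :
    G.IStratF q ((fun z : ℕ → X × Bool => fun n => (z n).1) '' 𝒳')ᶜ := by
  obtain ⟨σ', hσ'q, hσ'win⟩ := h
  obtain ⟨σ, hσ⟩ := G.exists_lap_le_over_lifts q σ' hσ'q
  refine ⟨σ, fun s => (hσ s).1, ?_⟩
  rintro x hx ⟨z, hz𝒳', rfl⟩
  have hproj : ∀ m, (preSeq z m).map Prod.fst = preSeq (fun n => (z n).1) m := fun m => by
    simp only [preSeq, List.map_map, Function.comp_def]
  refine hσ'win z (fun n => ?_) hz𝒳'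
  show G.tri ((preSeq z (n + 1)).map Prod.fst) (σ' (preSeq z n))
  rw [hproj]
  exact G.mono _ _ _ (hx n) ((hσ _).2 _ (hproj n))

theorem stmt6 {P X : Type} [Nonempty P] [Nonempty X] [Countable X]
    (G : GowersSpace P X) (𝒳' : Set (ℕ → X × Bool)) (q : P)
    (h : (G.double).IStratF q (𝒳'ᶜ)) :
    G.IStratF q ((fun z : ℕ → X × Bool => fun n => (z n).1) '' 𝒳')ᶜ :=
  stmt6_general G 𝒳' q h
end

section
/- Let G = (P, X, ≤, ≤*, ◁) be a Gowers space, 𝒳 ⊆ X^ω and p ∈ P. If player I has a strategy in the asymptotic game F_p to reach 𝒳, then player II has a strategy in Gowers' game G_p to reach 𝒳. -/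
open MeasureTheory Filter Topology TopologicalSpace

/-!
Player II simulates player I's strategy `σ` for `F_p`. When I plays `q ≤ p` in `G_p` at a
position `s`, we have `q ≤* p ≤* σ s`, so `q` and `σ s` have a common lower bound `r`, and II
answers with a point `x` such that `s⌢x ◁ r`. This move is legal for `q` in `G_p` and also a
legal answer to `σ s` in `F_p`, so every outcome is a run of `F_p` in which I follows `σ`.
-/

theorem preSeq_succ {X : Type*} (x : ℕ → X) (n : ℕ) : preSeq x (n + 1) = preSeq x n ++ [x n] := by
  simp only [preSeq, List.range_succ, List.map_append, List.map_singleton]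

namespace GowersSpace

variable {P X : Type*} (G : GowersSpace P X)

theorem exists_tri_append_of_les {q r : P} (h : G.les q r) (s : List X) :
    ∃ x, G.tri (s ++ [x]) q ∧ G.tri (s ++ [x]) r := by
  obtain ⟨t, htq, htr, -⟩ := G.diag q r h
  obtain ⟨x, hx⟩ := G.ext t s
  exact ⟨x, G.mono _ t q hx htq, G.mono _ t r hx htr⟩

def positions (answer : List X → P → X) : List P → List X :=
  List.foldl (fun s q => s ++ [answer s q]) []

theorem positions_concat (answer : List X → P → X) (l : List P) (q : P) :
    positions answer (l ++ [q]) = positions answer l ++ [answer (positions answer l) q] :=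
  List.foldl_concat _ _ _ _

-- The default `p` of `getLastD` is never read: II moves only after I has.
def strategyOfAnswer (answer : List X → P → X) (p : P) (l : List P) : X :=
  answer (positions answer l.dropLast) (l.getLastD p)

theorem gOut_strategyOfAnswer (answer : List X → P → X) (p : P) (f : ℕ → P) (n : ℕ) :
    gOut (strategyOfAnswer answer p) f n =
      answer (preSeq (gOut (strategyOfAnswer answer p) f) n) (f n) := by
  set x := gOut (strategyOfAnswer answer p) f
  have hstep : ∀ m, x m = answer (positions answer (preSeq f m)) (f m) := fun m => by
    change strategyOfAnswer answer p (preSeq f (m + 1)) = _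
    rw [preSeq_succ, strategyOfAnswer, List.dropLast_concat, List.getLastD_concat]
  have hpositions : ∀ m, positions answer (preSeq f m) = preSeq x m := by
    intro m
    induction m with
    | zero => rfl
    | succ m ih => rw [preSeq_succ, positions_concat, ih, preSeq_succ, hstep, ih]
  rw [hstep, hpositions]

theorem iiStratG_of_answer {p : P} {Y : Set (ℕ → X)} (answer : List X → P → X)
    (hlegal : ∀ s q, G.le q p → G.tri (s ++ [answer s q]) q)
    (hwin : ∀ (x : ℕ → X) (f : ℕ → P), (∀ n, G.le (f n) p) →
      (∀ n, x n = answer (preSeq x n) (f n)) → x ∈ Y) :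
    G.IIStratG p Y := by
  refine ⟨strategyOfAnswer answer p, fun f hf => ⟨fun n => ?_, ?_⟩⟩
  · rw [preSeq_succ, gOut_strategyOfAnswer]
    exact hlegal _ _ (hf n)
  · exact hwin _ f hf (gOut_strategyOfAnswer answer p f)

end GowersSpace

theorem stmt8_general {P X : Type}
    (G : GowersSpace P X) (𝒳 : Set (ℕ → X)) (p : P)
    (h : G.IStratF p 𝒳) :
    G.IIStratG p 𝒳 := by
  obtain ⟨σ, hσ, hσwin⟩ := h
  have hanswer : ∀ s q, ∃ x, G.le q p → G.tri (s ++ [x]) q ∧ G.tri (s ++ [x]) (σ s) := by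
    intro s q
    by_cases hq : G.le q p
    · have hles : G.les q (σ s) := G.les_trans _ _ _ (G.le_imp_les _ _ hq) (hσ s).2
      obtain ⟨x, hx⟩ := G.exists_tri_append_of_les hles s
      exact ⟨x, fun _ => hx⟩
    · obtain ⟨x, -⟩ := G.ext p s
      exact ⟨x, fun hq' => (hq hq').elim⟩
  choose answer hanswer using hanswer
  refine G.iiStratG_of_answer answer (fun s q hq => (hanswer s q hq).1) fun x f hf hx => ?_
  refine hσwin x fun n => ?_
  rw [preSeq_succ, hx n]
  exact (hanswer _ _ (hf n)).2

theorem stmt8 {P X : Type} [Nonempty P] [Nonempty X] [Countable X]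
    (G : GowersSpace P X) (𝒳 : Set (ℕ → X)) (p : P)
    (h : G.IStratF p 𝒳) :
    G.IIStratG p 𝒳 :=
  stmt8_general G 𝒳 p h
end

section
/- Let 𝒳 ⊆ ω^ω and let M be an infinite subset of ω. Suppose player I has a strategy in the asymptotic game F_M of the Mathias–Silver space to reach 𝒳. Then there exists an infinite N ⊆ M such that every strictly increasing sequence of elements of N belongs to 𝒳 (that is, identifying infinite subsets of ω with their increasing enumerations, every infinite subset of N belongs to 𝒳). -/
open MeasureTheory Filter Topology TopologicalSpace

/-!
Diagonalise against the strategy `σ`: choose `p 0 < p 1 < ⋯` in `M` so that `p k` lies in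
`σ s` for every sublist `s` of `[p 0, …, p (k-1)]`; this is possible because only finitely
many cofinite sets are involved. If `x` is strictly increasing with values in the range of `p`
and `x n = p k`, then `[x 0, …, x (n-1)]` is such a sublist, so `x` follows `σ` at every move.
-/

theorem Set.Infinite.inter_biInter_of_finite_diff {α ι : Type*} {M : Set α} (hM : M.Infinite)
    {I : Set ι} (hI : I.Finite) {t : ι → Set α} (ht : ∀ i ∈ I, (M \ t i).Finite) :
    (M ∩ ⋂ i ∈ I, t i).Infinite := by
  refine (hM.sdiff (hI.biUnion ht)).mono ?_
  rintro m ⟨hm, hnot⟩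
  refine ⟨hm, Set.mem_iInter₂.2 fun i hi => ?_⟩
  by_contra hmi
  exact hnot (Set.mem_biUnion hi ⟨hm, hmi⟩)

theorem preSeq_sublist_map_range {α : Type*} [LinearOrder α] {p x : ℕ → α}
    (hp : StrictMono p) (hx : StrictMono x) (hxp : ∀ j, x j ∈ Set.range p) {n k : ℕ}
    (hk : p k = x n) : (preSeq x n).Sublist ((List.range k).map p) := by
  have hsub : preSeq x n ⊆ (List.range k).map p := by
    simp only [preSeq, List.subset_def, List.mem_map, List.mem_range]
    rintro _ ⟨j, hj, rfl⟩
    obtain ⟨i, hi⟩ := hxp j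
    exact ⟨i, hp.lt_iff_lt.1 (hi ▸ hk ▸ hx hj), hi⟩
  exact List.sublist_of_subperm_of_pairwise (r := (· ≤ ·))
    (List.subperm_of_subset (List.nodup_range.map hx.injective) hsub)
    ((List.pairwise_lt_range.map x fun _ _ h => hx h).imp le_of_lt)
    ((List.pairwise_lt_range.map p fun _ _ h => hp h).imp le_of_lt)

namespace MathiasSilver

variable (σ : List ℕ → Set ℕ) (M : Set ℕ)

def Admissible (l : List ℕ) (m : ℕ) : Prop :=
  m ∈ M ∧ (∀ s ∈ l.sublists, m ∈ σ s) ∧ ∀ a ∈ l, a < m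

noncomputable def next (l : List ℕ) : ℕ := Classical.epsilon (Admissible σ M l)

noncomputable def diagList : ℕ → List ℕ
  | 0 => []
  | k + 1 => diagList k ++ [next σ M (diagList k)]

noncomputable def diagSeq (k : ℕ) : ℕ := next σ M (diagList σ M k)

theorem diagList_eq_map_range (k : ℕ) : diagList σ M k = (List.range k).map (diagSeq σ M) := by
  induction k with
  | zero => rfl
  | succ k ih => rw [diagList, List.range_succ, List.map_append, ← ih]; rfl

variable {σ M}

theorem admissible_next (hM : M.Infinite) (hσ : ∀ s, (M \ σ s).Finite) (l : List ℕ) :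
    Admissible σ M l (next σ M l) := by
  apply Classical.epsilon_spec
  obtain ⟨m, ⟨hmM, hmσ⟩, hlt⟩ := (hM.inter_biInter_of_finite_diff
    l.sublists.finite_toSet fun s _ => hσ s).exists_gt l.sum
  exact ⟨m, hmM, fun s hs => Set.mem_iInter₂.1 hmσ s hs,
    fun a ha => (List.le_sum_of_mem ha).trans_lt hlt⟩

theorem diagSeq_mem (hM : M.Infinite) (hσ : ∀ s, (M \ σ s).Finite) (k : ℕ) :
    diagSeq σ M k ∈ M :=
  (admissible_next hM hσ _).1

theorem diagSeq_strictMono (hM : M.Infinite) (hσ : ∀ s, (M \ σ s).Finite) :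
    StrictMono (diagSeq σ M) :=
  strictMono_nat_of_lt_succ fun k =>
    (admissible_next hM hσ _).2.2 _ (by simp [diagList, diagSeq])

theorem diagSeq_mem_of_sublist (hM : M.Infinite) (hσ : ∀ s, (M \ σ s).Finite) {k : ℕ}
    {s : List ℕ} (hs : s.Sublist ((List.range k).map (diagSeq σ M))) : diagSeq σ M k ∈ σ s :=
  (admissible_next hM hσ _).2.1 s (List.mem_sublists.2 (diagList_eq_map_range σ M k ▸ hs))

end MathiasSilver

theorem stmt9 (𝒳 : Set (ℕ → ℕ)) (M : Set ℕ) (hM : M.Infinite)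
    (h : ∃ σ : List ℕ → Set ℕ, (∀ s, σ s ⊆ M ∧ (M \ σ s).Finite) ∧
      ∀ x : ℕ → ℕ, (∀ n, x n ∈ σ (preSeq x n)) → x ∈ 𝒳) :
    ∃ N : Set ℕ, N ⊆ M ∧ N.Infinite ∧
      ∀ x : ℕ → ℕ, StrictMono x → (∀ n, x n ∈ N) → x ∈ 𝒳 := by
  obtain ⟨σ, hσ, hwin⟩ := h
  have hcofin : ∀ s, (M \ σ s).Finite := fun s => (hσ s).2
  have hmono := MathiasSilver.diagSeq_strictMono hM hcofin
  refine ⟨Set.range (MathiasSilver.diagSeq σ M),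
    Set.range_subset_iff.2 (MathiasSilver.diagSeq_mem hM hcofin),
    Set.infinite_range_of_injective hmono.injective, fun x hx hxN => hwin x fun n => ?_⟩
  obtain ⟨k, hk⟩ := hxN n
  exact hk ▸ MathiasSilver.diagSeq_mem_of_sublist hM hcofin
    (preSeq_sublist_map_range hmono hx hxN hk)
end

section
/- Let G = (P, X, ≤, ≤*, ◁) be a Gowers space satisfying the pigeonhole principle, let 𝒳 ⊆ X^ω and p ∈ P. If player II has a strategy in Gowers' game G_p to reach 𝒳, then there exists q ≤ p such that player I has a strategy in the asymptotic game F_q to reach 𝒳. -/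
open MeasureTheory Filter Topology TopologicalSpace

theorem eq_of_forall_preSeq_eq {X : Type*} {x y : ℕ → X} (h : ∀ n, preSeq x n = preSeq y n) :
    x = y := by
  funext n
  simpa [preSeq] using congrArg (·[n]?) (h (n + 1))

theorem preSeq_getD {X : Type*} (l : List X) (d : X) :
    preSeq (fun k => l.getD k d) l.length = l := by
  apply List.ext_getElem <;> simp +contextual [preSeq]

def partialOutcome {P X : Type*} (τ : List P → X) (l : List P) : List X :=
  (List.range l.length).map fun k => τ (l.take (k + 1))

theorem partialOutcome_append_singleton {P X : Type*} (τ : List P → X) (l : List P) (u : P) :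
    partialOutcome τ (l ++ [u]) = partialOutcome τ l ++ [τ (l ++ [u])] := by
  simp only [partialOutcome, List.length_append, List.length_singleton, List.range_succ,
    List.map_append, List.map_singleton]
  congr 1
  · refine List.map_congr_left fun k hk => ?_
    rw [List.take_append_of_le_length (by simp at hk; omega)]
  · rw [show l.length + 1 = (l ++ [u]).length by simp, List.take_length]

theorem preSeq_gOut {P X : Type*} (τ : List P → X) (f : ℕ → P) (n : ℕ) :
    preSeq (gOut τ f) n = partialOutcome τ (preSeq f n) := by
  simp only [preSeq, partialOutcome, List.length_map, List.length_range]
  refine List.map_congr_left fun k hk => ?_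
  rw [← List.map_take, List.take_range, min_eq_left (by simp at hk; omega)]
  rfl

namespace GowersSpace

variable {P X : Type*} (G : GowersSpace P X)

/-- The paper's `q ⊆_s A`. -/
def SubsetAt (q : P) (s : List X) (A : Set X) : Prop :=
  ∀ x, G.tri (s ++ [x]) q → x ∈ A

def IsIIStratG (p : P) (τ : List P → X) : Prop :=
  ∀ f : ℕ → P, (∀ n, G.le (f n) p) → ∀ n, G.tri (preSeq (gOut τ f) (n + 1)) (f n)

def answers (p : P) (τ : List P → X) (l : List P) : Set X :=
  {x | ∃ u, G.le u p ∧ τ (l ++ [u]) = x}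

theorem exists_le_forall_exists_lap {ι : Type*} [Countable ι] (Φ : ι → P → Prop)
    (hΦ : ∀ i q r, G.le r q → Φ i q → Φ i r) (hdense : ∀ i q, ∃ r, G.le r q ∧ Φ i r) (p : P) :
    ∃ Q, G.le Q p ∧ ∀ i, ∃ r, G.lap r Q ∧ Φ i r := by
  rcases isEmpty_or_nonempty ι with hι | hι
  · exact ⟨p, G.le_refl p, isEmptyElim⟩
  obtain ⟨e, he⟩ := exists_surjective_nat ι
  choose next hnext_le hnext using hdense
  let r : ℕ → P := fun n => Nat.rec p (fun n rn => next (e n) rn) n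
  have hr_succ : ∀ n, G.le (r (n + 1)) (r n) := fun n => hnext_le (e n) (r n)
  obtain ⟨lim, hlim⟩ := G.decseq r hr_succ
  obtain ⟨Q, hQlim, hQp, -⟩ := G.diag lim p (hlim 0)
  refine ⟨Q, hQp, fun i => ?_⟩
  obtain ⟨n, rfl⟩ := he i
  have hQr : G.les Q (r (n + 1)) := G.les_trans _ _ _ (G.le_imp_les _ _ hQlim) (hlim (n + 1))
  obtain ⟨r', hr'Q, hr'r, hQr'⟩ := G.diag Q (r (n + 1)) hQr
  exact ⟨r', ⟨hr'Q, hQr'⟩, hΦ _ _ _ hr'r (hnext (e n) (r n))⟩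

variable {G}

theorem SubsetAt.anti {q r : P} {s : List X} {A : Set X} (h : G.SubsetAt q s A)
    (hrq : G.le r q) : G.SubsetAt r s A :=
  fun x hx => h x (G.mono _ _ _ hx hrq)

theorem Pigeonhole.exists_le_forall_exists_lap [Countable X] (hPH : G.Pigeonhole)
    (A : List X → Set X) (p : P) :
    ∃ Q, G.le Q p ∧ ∀ s, ∃ r, G.lap r Q ∧ (G.SubsetAt r s (A s) ∨ G.SubsetAt r s (A s)ᶜ) :=
  G.exists_le_forall_exists_lap (fun s r => G.SubsetAt r s (A s) ∨ G.SubsetAt r s (A s)ᶜ)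
    (fun _ _ _ hrq => Or.imp (·.anti hrq) (·.anti hrq)) (fun s q => hPH q s (A s)) p

variable {p : P} {τ : List P → X}

theorem IsIIStratG.tri_partialOutcome (hτ : G.IsIIStratG p τ) {l : List P}
    (hl : ∀ v ∈ l, G.le v p) {u : P} (hu : G.le u p) :
    G.tri (partialOutcome τ (l ++ [u])) u := by
  let f : ℕ → P := fun k => (l ++ [u]).getD k p
  have hf : ∀ k, G.le (f k) p := by
    intro k
    show G.le ((l ++ [u]).getD k p) p
    by_cases hk : k < (l ++ [u]).length
    · rw [List.getD_eq_getElem _ _ hk]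
      rcases List.mem_append.1 (List.getElem_mem hk) with hv | hv
      · exact hl _ hv
      · rw [List.eq_of_mem_singleton hv]; exact hu
    · rw [List.getD_eq_default _ _ (not_lt.1 hk)]; exact G.le_refl p
  have hfl : preSeq f (l.length + 1) = l ++ [u] := by
    convert preSeq_getD (l ++ [u]) p using 2; simp
  have hfu : f l.length = u := by simp [f]
  have := hτ f hf l.length
  rwa [preSeq_gOut, hfl, hfu] at this

variable (G p τ)

open scoped Classical in
noncomputable def pick (l : List P) (x : X) : P :=
  if h : x ∈ G.answers p τ l then h.choose else p

/-- The play of player I that makes `τ` answer `s` as long as this is possible. -/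
noncomputable def witnessPlay (s : List X) : List P :=
  s.foldl (fun l x => l ++ [G.pick p τ l x]) []

variable {G p τ}

theorem pick_le (l : List P) (x : X) : G.le (G.pick p τ l x) p := by
  unfold pick
  split_ifs with h
  exacts [h.choose_spec.1, G.le_refl p]

theorem pick_spec {l : List P} {x : X} (h : x ∈ G.answers p τ l) :
    τ (l ++ [G.pick p τ l x]) = x := by
  simp only [pick, dif_pos h]
  exact h.choose_spec.2

theorem witnessPlay_append_singleton (s : List X) (x : X) :
    G.witnessPlay p τ (s ++ [x]) =
      G.witnessPlay p τ s ++ [G.pick p τ (G.witnessPlay p τ s) x] := by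
  simp [witnessPlay]

theorem le_of_mem_witnessPlay (s : List X) : ∀ v ∈ G.witnessPlay p τ s, G.le v p := by
  induction s using List.reverseRecOn with
  | nil => simp [witnessPlay]
  | append_singleton s x ih =>
    simpa [witnessPlay_append_singleton, or_imp, forall_and] using ⟨ih, pick_le _ x⟩

theorem witnessPlay_preSeq (x : ℕ → X) (n : ℕ) :
    G.witnessPlay p τ (preSeq x n) =
      preSeq (fun k => G.pick p τ (G.witnessPlay p τ (preSeq x k)) (x k)) n := by
  induction n with
  | zero => rfl
  | succ n ih => rw [preSeq_succ, preSeq_succ, witnessPlay_append_singleton, ih]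

theorem partialOutcome_witnessPlay_append_singleton {s : List X} {x : X}
    (hs : partialOutcome τ (G.witnessPlay p τ s) = s)
    (hx : x ∈ G.answers p τ (G.witnessPlay p τ s)) :
    partialOutcome τ (G.witnessPlay p τ (s ++ [x])) = s ++ [x] := by
  rw [witnessPlay_append_singleton, partialOutcome_append_singleton, hs, pick_spec hx]

theorem exists_gOut_eq_of_partialOutcome_witnessPlay {x : ℕ → X}
    (hx : ∀ n, partialOutcome τ (G.witnessPlay p τ (preSeq x n)) = preSeq x n) :
    ∃ f : ℕ → P, (∀ n, G.le (f n) p) ∧ gOut τ f = x :=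
  ⟨_, fun _ => pick_le _ _,
    eq_of_forall_preSeq_eq fun n => by rw [preSeq_gOut, ← witnessPlay_preSeq, hx]⟩

theorem IsIIStratG.exists_mem_answers_tri (hτ : G.IsIIStratG p τ) {s : List X}
    (hs : partialOutcome τ (G.witnessPlay p τ s) = s) {q : P} (hq : G.le q p) :
    ∃ y ∈ G.answers p τ (G.witnessPlay p τ s), G.tri (s ++ [y]) q := by
  refine ⟨τ (G.witnessPlay p τ s ++ [q]), ⟨q, hq, rfl⟩, ?_⟩
  have := hτ.tri_partialOutcome (le_of_mem_witnessPlay (τ := τ) s) hq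
  rwa [partialOutcome_append_singleton, hs] at this

theorem IsIIStratG.subsetAt_answers (hτ : G.IsIIStratG p τ) {s : List X}
    (hs : partialOutcome τ (G.witnessPlay p τ s) = s) {q : P} (hq : G.le q p)
    (hdecide : G.SubsetAt q s (G.answers p τ (G.witnessPlay p τ s)) ∨
      G.SubsetAt q s (G.answers p τ (G.witnessPlay p τ s))ᶜ) :
    G.SubsetAt q s (G.answers p τ (G.witnessPlay p τ s)) := by
  refine hdecide.resolve_right fun hcompl => ?_
  obtain ⟨y, hy, hyq⟩ := hτ.exists_mem_answers_tri hs hq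
  exact hcompl y hyq hy

end GowersSpace

theorem stmt10_general {P X : Type} [Countable X]
    (G : GowersSpace P X) (hPH : G.Pigeonhole)
    (𝒳 : Set (ℕ → X)) (p : P)
    (h : G.IIStratG p 𝒳) :
    ∃ q, G.le q p ∧ G.IStratF q 𝒳 := by
  obtain ⟨τ, hτ⟩ := h
  have hτlegal : G.IsIIStratG p τ := fun f hf => (hτ f hf).1
  obtain ⟨Q, hQp, hQ⟩ :=
    hPH.exists_le_forall_exists_lap (fun s => G.answers p τ (G.witnessPlay p τ s)) p
  choose σ hσQ hσ using hQ
  refine ⟨Q, hQp, σ, hσQ, fun x hx => ?_⟩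
  have hrealized : ∀ n, partialOutcome τ (G.witnessPlay p τ (preSeq x n)) = preSeq x n := by
    intro n
    induction n with
    | zero => rfl
    | succ n ih =>
      have hσp : G.le (σ (preSeq x n)) p := G.le_trans _ _ _ (hσQ _).1 hQp
      have hxn := hτlegal.subsetAt_answers ih hσp (hσ _) (x n) (preSeq_succ x n ▸ hx n)
      rw [preSeq_succ, GowersSpace.partialOutcome_witnessPlay_append_singleton ih hxn]
  obtain ⟨f, hfp, rfl⟩ := GowersSpace.exists_gOut_eq_of_partialOutcome_witnessPlay hrealized
  exact (hτ f hfp).2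

theorem stmt10 {P X : Type} [Nonempty P] [Nonempty X] [Countable X]
    (G : GowersSpace P X) (hPH : G.Pigeonhole)
    (𝒳 : Set (ℕ → X)) (p : P)
    (h : G.IIStratG p 𝒳) :
    ∃ q, G.le q p ∧ G.IStratF q 𝒳 :=
  stmt10_general G hPH 𝒳 p h
end

section
/- (Mathias–Silver theorem.) Let 𝒳 be an analytic subset of [ω]^ω, the set of infinite subsets of ω with the topology inherited from the Cantor space 2^ω. Then for every infinite M ⊆ ω there exists an infinite N ⊆ M such that either every infinite S ⊆ N belongs to 𝒳, or every infinite S ⊆ N belongs to the complement of 𝒳. -/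
/-!
Give the infinite subsets of `ℕ` the Ellentuck topology, generated by the cubes
`[s, A] = {x | s ⊆ x ⊆ s ∪ A}` with `s` finite. Combinatorial forcing shows that open sets are
Ramsey: if no infinite `B ⊆ A` has `[s, B] ⊆ O`, a fusion argument produces an infinite `B ⊆ A`
that keeps rejecting every finite extension `s ∪ t`, `t ⊆ B`, and then `[s, B]` misses `O`.
Applied to the complement of the closure, nowhere dense sets are avoided on a cube; another
fusion does the same for meagre sets, so every set with the Baire property is Ramsey.

The preimage of an analytic subset of Cantor space under the continuous map `x ↦ 1_x` is the
Souslin operation applied to closed sets, and the Baire property is preserved by the Souslin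
operation in every topological space (Baire hulls, which exist by the Banach category theorem).
-/

open MeasureTheory Filter Topology TopologicalSpace

open Set Function

lemma StrictMono.range_inter_Iic {b : ℕ → ℕ} (hb : StrictMono b) (k : ℕ) :
    range b ∩ Iic (b k) = ↑((Finset.range (k + 1)).image b) := by
  ext a
  simp only [mem_inter_iff, mem_range, mem_Iic, Finset.coe_image, Finset.coe_range, mem_image,
    mem_Iio, Nat.lt_succ_iff]
  constructor
  · rintro ⟨⟨j, rfl⟩, hj⟩
    exact ⟨j, hb.le_iff_le.1 hj, rfl⟩
  · rintro ⟨j, hj, rfl⟩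
    exact ⟨⟨j, rfl⟩, hb.monotone hj⟩

lemma Set.Infinite.inter_Ioi {α : Type*} [LinearOrder α] [LocallyFiniteOrderBot α] {A : Set α}
    (hA : A.Infinite) (a : α) : (A ∩ Ioi a).Infinite :=
  (hA.sdiff (finite_Iic a)).mono fun _ hb => ⟨hb.1, not_le.1 hb.2⟩

theorem exists_strictMono_fusion (P : Finset ℕ → Set ℕ → Prop)
    (hP : ∀ {s A B}, B ⊆ A → P s A → P s B) {A : Set ℕ} (hA : A.Infinite) (h₀ : P ∅ A)
    (step : ∀ s C, P s C → C ⊆ A → C.Infinite →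
      ∃ n ∈ C, ∃ C' ⊆ C ∩ Ioi n, C'.Infinite ∧ P (insert n s) C') :
    ∃ b : ℕ → ℕ, StrictMono b ∧ range b ⊆ A ∧
      ∀ k, P ((Finset.range (k + 1)).image b) (range b ∩ Ioi (b k)) := by
  let St := {p : Finset ℕ × Set ℕ // P p.1 p.2 ∧ p.2 ⊆ A ∧ p.2.Infinite}
  choose n hn C hC hCinf hPC using fun p : St => step p.1.1 p.1.2 p.2.1 p.2.2.1 p.2.2.2
  let next : St → St := fun p =>
    ⟨(insert (n p) p.1.1, C p), hPC p, (hC p).trans (inter_subset_left.trans p.2.2.1), hCinf p⟩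
  let seq : ℕ → St := fun k => Nat.rec ⟨(∅, A), h₀, subset_rfl, hA⟩ (fun _ => next) k
  let b : ℕ → ℕ := fun k => n (seq k)
  have hsucc : ∀ k, (seq (k + 1)).1.2 ⊆ (seq k).1.2 ∩ Ioi (b k) := fun k => hC (seq k)
  have hanti : Antitone fun k => (seq k).1.2 :=
    antitone_nat_of_succ_le fun k => (hsucc k).trans inter_subset_left
  have hb : StrictMono b := strictMono_nat_of_lt_succ fun k => (hsucc k (hn (seq (k + 1)))).2
  have hfin : ∀ k, (seq k).1.1 = (Finset.range k).image b := by
    intro k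
    induction k with
    | zero => rfl
    | succ k ih => rw [Finset.range_add_one, Finset.image_insert, ← ih]
  refine ⟨b, hb, ?_, fun k => hfin (k + 1) ▸ hP ?_ (seq (k + 1)).2.1⟩
  · rintro _ ⟨j, rfl⟩
    exact hanti (Nat.zero_le j) (hn (seq j))
  · rintro _ ⟨⟨j, rfl⟩, hj⟩
    exact hanti (hb.lt_iff_lt.1 hj) (hn (seq j))

lemma exists_maximal_pairwiseDisjoint {β : Type*} (p : Set β → Prop) :
    ∃ 𝒱 : Set (Set β), Maximal (fun 𝒱 => (∀ V ∈ 𝒱, p V) ∧ 𝒱.PairwiseDisjoint id) 𝒱 := by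
  refine zorn_subset _ fun c hc hchain => ⟨⋃₀ c, ⟨?_, ?_⟩, fun _ => subset_sUnion_of_mem⟩
  · rintro V ⟨𝒱, h𝒱, hV⟩
    exact (hc h𝒱).1 V hV
  · rintro V ⟨𝒱₁, h₁, hV⟩ W ⟨𝒱₂, h₂, hW⟩
    rcases hchain.total h₁ h₂ with h | h
    · exact (hc h₂).2 (h hV) hW
    · exact (hc h₁).2 hV (h hW)

/-- The Souslin operation; `PiNat.res f n` lists `f (n - 1), …, f 0`. -/
def souslin {β : Type*} (A : List ℕ → Set β) : Set β :=
  {x | ∃ f : ℕ → ℕ, ∀ n, x ∈ A (PiNat.res f n)}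

lemma preimage_souslin {α β : Type*} (φ : α → β) (A : List ℕ → Set β) :
    φ ⁻¹' souslin A = souslin fun t => φ ⁻¹' A t :=
  rfl

lemma exists_forall_res (P : List ℕ → Prop) (h₀ : P []) (h : ∀ t, P t → ∃ m, P (m :: t)) :
    ∃ f : ℕ → ℕ, ∀ n, P (PiNat.res f n) := by
  choose g hg using h
  let c : ℕ → {t // P t} := fun n => Nat.rec ⟨[], h₀⟩ (fun _ t => ⟨_, hg t.1 t.2⟩) n
  refine ⟨fun n => g (c n).1 (c n).2, fun n => ?_⟩
  have : (c n).1 = PiNat.res (fun n => g (c n).1 (c n).2) n := by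
    induction n with
    | zero => rfl
    | succ n ih => exact congrArg (_ :: ·) ih
  exact this ▸ (c n).2

section BaireProperty

variable {α : Type*} [TopologicalSpace α]

lemma Filter.EventuallyEq.isMeagre_sdiff {s t : Set α} (h : s =ᵇ t) : IsMeagre (s \ t) :=
  mem_of_superset h.le fun _ hx hst => hst.2 (hx hst.1)

lemma IsMeagre.exists_isNowhereDense_cover {s : Set α} (h : IsMeagre s) :
    ∃ F : ℕ → Set α, (∀ n, IsNowhereDense (F n)) ∧ s ⊆ ⋃ n, F n := by
  obtain ⟨S, hS, hSc, hsS⟩ := isMeagre_iff_countable_union_isNowhereDense.1 h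
  obtain ⟨F, hF⟩ := (hSc.insert ∅).exists_eq_range (insert_nonempty _ _)
  refine ⟨F, fun n => ?_, fun x hx => ?_⟩
  · rcases (hF ▸ mem_range_self n : F n ∈ insert ∅ S) with h0 | hn
    · simp [h0]
    · exact hS _ hn
  · obtain ⟨t, ht, hxt⟩ := hsS hx
    obtain ⟨n, rfl⟩ : t ∈ range F := hF ▸ mem_insert_of_mem _ ht
    exact mem_iUnion.2 ⟨n, hxt⟩

lemma isNowhereDense_of_disjoint_of_dense {s U : Set α} (hU : IsOpen U) (hd : Dense U)
    (h : Disjoint s U) : IsNowhereDense s :=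
  (isClosed_isNowhereDense_iff_compl.2 ⟨by simpa using hU, by simpa using hd⟩).2.mono
    h.subset_compl_right

lemma IsOpen.isNowhereDense_frontier {s : Set α} (hs : IsOpen s) : IsNowhereDense (frontier s) :=
  isClosed_frontier.isNowhereDense_iff.2 (frontier_compl s ▸ interior_frontier hs.isClosed_compl)

lemma isNowhereDense_iUnion_inter {ι : Type*} {V F : ι → Set α} (hV : ∀ i, IsOpen (V i))
    (hdisj : Pairwise (Disjoint on V)) (hF : ∀ i, IsNowhereDense (F i)) :
    IsNowhereDense (⋃ i, V i ∩ F i) := by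
  refine isNowhereDense_of_disjoint_of_dense
    (U := (⋃ i, V i \ closure (F i)) ∪ (closure (⋃ i, V i))ᶜ)
    ((isOpen_iUnion fun i => (hV i).sdiff isClosed_closure).union isClosed_closure.isOpen_compl)
    (dense_iff_inter_open.2 fun W hW ⟨x, hxW⟩ => ?_) (disjoint_left.2 fun x hx hxU => ?_)
  · by_cases hWV : (W ∩ ⋃ i, V i).Nonempty
    · obtain ⟨y, hyW, hyV⟩ := hWV
      obtain ⟨i, hyV⟩ := mem_iUnion.1 hyV
      have hWV : ¬ W ∩ V i ⊆ closure (F i) := fun h =>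
        (hF i).subset (interior_maximal h (hW.inter (hV i)) ⟨hyW, hyV⟩)
      obtain ⟨z, ⟨hzW, hzV⟩, hz⟩ := not_subset.1 hWV
      exact ⟨z, hzW, Or.inl (mem_iUnion.2 ⟨i, hzV, hz⟩)⟩
    · exact ⟨x, hxW, Or.inr fun hx => hWV (mem_closure_iff.1 hx W hW hxW)⟩
  · obtain ⟨i, hxV, hxF⟩ := mem_iUnion.1 hx
    rcases hxU with hxU | hxU
    · obtain ⟨j, hxV', hxF'⟩ := mem_iUnion.1 hxU
      obtain rfl : j = i := hdisj.eq (not_disjoint_iff.2 ⟨x, hxV', hxV⟩)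
      exact hxF' (subset_closure hxF)
    · exact hxU (subset_closure (mem_iUnion.2 ⟨i, hxV⟩))

/-- **Banach category theorem**: a set that is meagre near each of its points is meagre. -/
theorem isMeagre_inter_sUnion (Z : Set α) :
    IsMeagre (Z ∩ ⋃₀ {U : Set α | IsOpen U ∧ IsMeagre (U ∩ Z)}) := by
  obtain ⟨𝒱, h𝒱max⟩ := exists_maximal_pairwiseDisjoint fun V : Set α => IsOpen V ∧ IsMeagre (V ∩ Z)
  obtain ⟨h𝒱, hdisj⟩ := h𝒱max.prop
  set D := ⋃₀ 𝒱
  have hD : IsOpen D := isOpen_sUnion fun V hV => (h𝒱 V hV).1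
  have hclosure : ⋃₀ {U : Set α | IsOpen U ∧ IsMeagre (U ∩ Z)} ⊆ closure D := by
    rintro x ⟨U, ⟨hU, hUZ⟩, hxU⟩
    by_contra hx
    have hins : insert (U \ closure D) 𝒱 ∈
        {𝒱 | (∀ V ∈ 𝒱, IsOpen V ∧ IsMeagre (V ∩ Z)) ∧ 𝒱.PairwiseDisjoint id} := by
      refine ⟨forall_mem_insert.2 ⟨⟨hU.sdiff isClosed_closure,
        hUZ.mono (inter_subset_inter_left _ sdiff_subset)⟩, h𝒱⟩, hdisj.insert fun V hV _ => ?_⟩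
      exact disjoint_sdiff_left.mono_right ((subset_sUnion_of_mem hV).trans subset_closure)
    have := h𝒱max.mem_of_prop_insert hins
    exact hx (subset_closure (subset_sUnion_of_mem this ⟨hxU, hx⟩))
  -- `Z ∩ D` is covered by the nowhere dense sets `⋃ V, V ∩ F V n`, the rest by `frontier D`.
  choose F hFnd hFcov using fun V : 𝒱 => (h𝒱 V V.2).2.exists_isNowhereDense_cover
  have hT : ∀ n, IsNowhereDense (⋃ V : 𝒱, (V : Set α) ∩ F V n) := fun n =>
    isNowhereDense_iUnion_inter (fun V => (h𝒱 V V.2).1)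
      (fun V W hVW => hdisj V.2 W.2 (Subtype.coe_ne_coe.2 hVW)) (hFnd · n)
  refine ((isMeagre_iUnion fun n => (hT n).isMeagre).union
    hD.isNowhereDense_frontier.isMeagre).mono ?_
  rintro x ⟨hxZ, hxG⟩
  by_cases hxD : x ∈ D
  · obtain ⟨V, hV, hxV⟩ := hxD
    obtain ⟨n, hn⟩ := mem_iUnion.1 (hFcov ⟨V, hV⟩ ⟨hxV, hxZ⟩)
    exact Or.inl (mem_iUnion.2 ⟨n, mem_iUnion.2 ⟨⟨V, hV⟩, hxV, hn⟩⟩)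
  · exact Or.inr ⟨hclosure hxG, by rwa [hD.interior_eq]⟩

lemma exists_baireMeasurableSet_hull (Z : Set α) : ∃ H : Set α, Z ⊆ H ∧ BaireMeasurableSet H ∧
    ∀ W, BaireMeasurableSet W → W ⊆ H \ Z → IsMeagre W := by
  set G := ⋃₀ {U : Set α | IsOpen U ∧ IsMeagre (U ∩ Z)}
  have hG : IsOpen G := isOpen_sUnion fun U hU => hU.1
  refine ⟨Z ∪ Gᶜ, subset_union_left, ?_, fun W hW hWZ => ?_⟩
  · have : Z ∪ Gᶜ = (Z ∩ G) ∪ Gᶜ := by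
      ext x
      by_cases hx : x ∈ G <;> simp [hx]
    rw [this]
    exact (isMeagre_inter_sUnion Z).baireMeasurableSet.union hG.baireMeasurableSet.compl
  obtain ⟨U, hU, hWU⟩ := hW.residualEq_isOpen
  have hUZ : IsMeagre (U ∩ Z) := by
    refine hWU.symm.isMeagre_sdiff.mono fun x hx => ?_
    exact ⟨hx.1, fun hxW => (hWZ hxW).2 hx.2⟩
  have hUG : U ⊆ G := subset_sUnion_of_mem ⟨hU, hUZ⟩
  refine hWU.isMeagre_sdiff.mono fun x hxW => ?_
  refine ⟨hxW, fun hxU => ?_⟩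
  rcases (hWZ hxW).1 with hxZ | hxG
  · exact (hWZ hxW).2 hxZ
  · exact hxG (hUG hxU)

theorem baireMeasurableSet_souslin {A : List ℕ → Set α} (hA : ∀ t, BaireMeasurableSet (A t)) :
    BaireMeasurableSet (souslin A) := by
  let S : List ℕ → Set α := fun t =>
    {x | ∃ f : ℕ → ℕ, PiNat.res f t.length = t ∧ ∀ n, x ∈ A (PiNat.res f n)}
  have hSA : ∀ t, S t ⊆ A t := fun t x ⟨f, hft, hf⟩ => hft ▸ hf t.length
  have hS : ∀ t, S t ⊆ ⋃ m, S (m :: t) := fun t x ⟨f, hft, hf⟩ =>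
    mem_iUnion.2 ⟨f t.length, f, by simp [PiNat.res_succ, hft], hf⟩
  choose hull hS_hull hhull hhull_min using fun t => exists_baireMeasurableSet_hull (S t)
  let H : List ℕ → Set α := fun t => hull t ∩ A t
  have hH : ∀ t, BaireMeasurableSet (H t) := fun t => (hhull t).inter (hA t)
  let W : List ℕ → Set α := fun t => H t \ ⋃ m, H (m :: t)
  -- `W t` is a Baire measurable subset of `hull t \ S t`.
  have hW : IsMeagre (⋃ t, W t) := by
    refine isMeagre_iUnion fun t => hhull_min t _ ((hH t).diff (.iUnion fun m => hH _)) ?_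
    refine fun x ⟨hxH, hx⟩ => ⟨hxH.1, fun hxS => hx ?_⟩
    obtain ⟨m, hm⟩ := mem_iUnion.1 (hS t hxS)
    exact mem_iUnion.2 ⟨m, hS_hull _ hm, hSA _ hm⟩
  have hsub : souslin A ⊆ H [] := fun x ⟨f, hf⟩ => ⟨hS_hull [] ⟨f, rfl, hf⟩, hf 0⟩
  have hmeagre : IsMeagre (H [] \ souslin A) := by
    refine hW.mono fun x ⟨hx, hxA⟩ => by_contra fun hxW => hxA ?_
    obtain ⟨f, hf⟩ := exists_forall_res (fun t => x ∈ H t) hx fun t hxt => by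
      by_contra! h
      exact hxW (mem_iUnion.2 ⟨t, hxt, by simpa using h⟩)
    exact ⟨f, fun n => (hf n).2⟩
  simpa [sdiff_sdiff_cancel_left hsub] using (hH []).diff hmeagre.baireMeasurableSet

end BaireProperty

section Analytic

variable {β : Type*} [TopologicalSpace β]

lemma Continuous.range_eq_souslin [T2Space β] {g : (ℕ → ℕ) → β} (hg : Continuous g) :
    range g = souslin fun t => closure (g '' {f | PiNat.res f t.length = t}) := by
  ext y
  simp only [souslin, PiNat.res_length, ← PiNat.cylinder_eq_res, mem_ofPred_eq]
  refine ⟨fun ⟨f, hf⟩ => ⟨f, fun n => subset_closure ⟨f, PiNat.self_mem_cylinder f n, hf⟩⟩,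
    fun ⟨f, hf⟩ => ⟨f, (eq_of_nhds_neBot (ClusterPt.mono ?_ hg.continuousAt)).symm⟩⟩
  refine clusterPt_iff_forall_mem_closure.2 fun s hs => ?_
  obtain ⟨_, ⟨x, n, rfl⟩, hfx, hxs⟩ :=
    (PiNat.isTopologicalBasis_cylinders fun _ => ℕ).mem_nhds_iff.1 (mem_map.1 hs)
  rw [PiNat.mem_cylinder_iff_eq] at hfx
  exact closure_mono (image_subset_iff.2 (hfx ▸ hxs)) (hf n)

lemma MeasureTheory.AnalyticSet.baireMeasurableSet_preimage {α : Type*} [TopologicalSpace α]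
    [T2Space β] {s : Set β} (hs : AnalyticSet s) {φ : α → β} (hφ : Continuous φ) :
    BaireMeasurableSet (φ ⁻¹' s) := by
  rw [AnalyticSet] at hs
  obtain rfl | ⟨g, hg, rfl⟩ := hs
  · exact isOpen_empty.baireMeasurableSet
  rw [hg.range_eq_souslin, preimage_souslin]
  exact baireMeasurableSet_souslin fun t =>
    (isClosed_closure.preimage hφ).isOpen_compl.baireMeasurableSet.of_compl

end Analytic

def EllentuckSpace : Type := {x : Set ℕ // x.Infinite}

namespace EllentuckSpace

variable {s u : Finset ℕ} {A B D : Set ℕ} {x : EllentuckSpace} {n : ℕ}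

/-- Ellentuck's `[s, A]`, except that `A` need not lie above `max s`. -/
def cube (s : Finset ℕ) (A : Set ℕ) : Set EllentuckSpace := {x | ↑s ⊆ x.1 ∧ x.1 ⊆ ↑s ∪ A}

lemma cube_mono (h : B ⊆ A) : cube s B ⊆ cube s A :=
  fun _ hx => ⟨hx.1, hx.2.trans (union_subset_union_right _ h)⟩

lemma cube_nonempty (s : Finset ℕ) (hA : A.Infinite) : (cube s A).Nonempty :=
  ⟨⟨↑s ∪ A, hA.mono subset_union_right⟩, subset_union_left, subset_rfl⟩

lemma mem_cube_empty : x ∈ cube ∅ A ↔ x.1 ⊆ A := by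
  simp [cube]

lemma sdiff_subset_of_mem_cube (hx : x ∈ cube s A) : x.1 \ ↑s ⊆ A :=
  fun _ ha => (hx.2 ha.1).resolve_left ha.2

lemma cube_sdiff_subset (hsu : s ⊆ u) (hux : ↑u ⊆ x.1) (hx : x ∈ cube s A) :
    cube u (x.1 \ ↑u) ⊆ cube s A := by
  refine fun y hy => ⟨(Finset.coe_subset.2 hsu).trans hy.1, hy.2.trans ?_⟩
  rw [union_sdiff_cancel hux]
  exact hx.2

lemma mem_cube_inter_Ioi (hx : x ∈ cube s D) (hsu : s ⊆ u) (hux : ↑u ⊆ x.1)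
    (hn : x.1 ∩ Iic n ⊆ u) : x ∈ cube u (D ∩ Ioi n) := by
  refine ⟨hux, fun a ha => or_iff_not_imp_left.2 fun hau => ⟨?_, ?_⟩⟩
  · exact sdiff_subset_of_mem_cube hx ⟨ha, fun has => hau (hsu has)⟩
  · exact not_le.1 fun (han : a ≤ n) => hau (hn ⟨ha, han⟩)

lemma exists_mem_cube_union (hx : x ∈ cube s D) (n : ℕ) :
    ∃ t : Finset ℕ, ↑t ⊆ D ∩ Iic n ∧ x.1 ∩ Iic n ⊆ ↑(s ∪ t) ∧
      x ∈ cube (s ∪ t) (D ∩ Ioi n) := by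
  have hfin : ((x.1 \ ↑s) ∩ Iic n).Finite := (finite_Iic n).subset inter_subset_right
  have hxn : x.1 ∩ Iic n ⊆ ↑(s ∪ hfin.toFinset) := fun a ⟨ha, han⟩ => by
    by_cases has : a ∈ s <;> simp [has, ha, han]
  refine ⟨hfin.toFinset, ?_, hxn, mem_cube_inter_Ioi hx Finset.subset_union_left ?_ hxn⟩
  · rw [hfin.coe_toFinset]
    exact inter_subset_inter_left _ (sdiff_subset_of_mem_cube hx)
  · rw [Finset.coe_union, hfin.coe_toFinset]
    exact union_subset hx.1 (inter_subset_left.trans sdiff_subset)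

instance : TopologicalSpace EllentuckSpace :=
  generateFrom (range fun p : Finset ℕ × Set ℕ => cube p.1 p.2)

lemma isTopologicalBasis_cube :
    IsTopologicalBasis (range fun p : Finset ℕ × Set ℕ => cube p.1 p.2) where
  exists_subset_inter := by
    rintro _ ⟨⟨s₁, A₁⟩, rfl⟩ _ ⟨⟨s₂, A₂⟩, rfl⟩ x ⟨hx₁, hx₂⟩
    have hs : ↑(s₁ ∪ s₂) ⊆ x.1 := by
      rw [Finset.coe_union]
      exact union_subset hx₁.1 hx₂.1
    refine ⟨_, ⟨(s₁ ∪ s₂, x.1 \ ↑(s₁ ∪ s₂)), rfl⟩, ⟨hs, by simp⟩, ?_⟩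
    exact subset_inter (cube_sdiff_subset Finset.subset_union_left hs hx₁)
      (cube_sdiff_subset Finset.subset_union_right hs hx₂)
  sUnion_eq := sUnion_eq_univ_iff.2 fun x => ⟨_, ⟨(∅, univ), rfl⟩, by simp [cube]⟩
  eq_generateFrom := rfl

lemma isOpen_cube (s : Finset ℕ) (A : Set ℕ) : IsOpen (cube s A) :=
  isTopologicalBasis_cube.isOpen ⟨(s, A), rfl⟩

lemma continuous_boolIndicator : Continuous fun x : EllentuckSpace => x.1.boolIndicator := by
  refine continuous_pi fun n =>
    (continuous_boolIndicator_iff_isClopen {x : EllentuckSpace | n ∈ x.1}).2 ⟨?_, ?_⟩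
  · refine isOpen_compl_iff.1 (isTopologicalBasis_cube.isOpen_iff.2 fun x hx => ?_)
    exact ⟨_, ⟨(∅, x.1), rfl⟩, mem_cube_empty.2 subset_rfl,
      fun y hy hny => hx (mem_cube_empty.1 hy hny)⟩
  · convert isOpen_cube {n} univ
    ext x
    simp [cube]

variable {O : Set EllentuckSpace}

def Rejects (O : Set EllentuckSpace) (s : Finset ℕ) (A : Set ℕ) : Prop :=
  ∀ B ⊆ A, B.Infinite → ¬cube s B ⊆ O

lemma Rejects.mono (h : B ⊆ A) (hA : Rejects O s A) : Rejects O s B :=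
  fun C hC => hA C (hC.trans h)

lemma Rejects.exists_insert (hA : A.Infinite) (h : Rejects O s A) :
    ∃ n ∈ A, ∃ A' ⊆ A ∩ Ioi n, A'.Infinite ∧ Rejects O (insert n s) A' := by
  by_contra! hcon
  simp only [Rejects, not_forall, not_not] at hcon
  obtain ⟨b, hb, hbA, hP⟩ := exists_strictMono_fusion
    (fun t C => ∀ m ∈ t, cube (insert m s) C ⊆ O) (fun hBA h m hm => (cube_mono hBA).trans (h m hm))
    hA (by simp) fun t C hC hCA hCinf => by
      have hn := Nat.sInf_mem hCinf.nonempty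
      obtain ⟨B, hB, hBinf, hBO⟩ := hcon _ (hCA hn) (C ∩ Ioi (sInf C))
        (inter_subset_inter_left _ hCA) (hCinf.inter_Ioi _)
      exact ⟨_, hn, B, hB, hBinf, Finset.forall_mem_insert _ _ _ |>.2
        ⟨hBO, fun m hm => (cube_mono (hB.trans inter_subset_left)).trans (hC m hm)⟩⟩
  -- A point of `[s, range b]` lies in `[insert m s, range b ∩ Ioi m]`, `m` its least new element.
  refine h _ hbA (infinite_range_of_injective hb.injective) fun x hx => ?_
  have hm : sInf (x.1 \ ↑s) ∈ x.1 \ ↑s := Nat.sInf_mem (x.2.sdiff s.finite_toSet).nonempty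
  obtain ⟨k, hk⟩ := sdiff_subset_of_mem_cube hx hm
  refine hP k (b k) (Finset.mem_image_of_mem b (Finset.self_mem_range_succ k))
    (mem_cube_inter_Ioi hx (Finset.subset_insert _ _) ?_ fun a ⟨ha, hak⟩ => ?_)
  · rw [Finset.coe_insert, hk]
    exact insert_subset hm.1 hx.1
  · by_cases has : a ∈ s
    · exact Finset.mem_insert_of_mem has
    · exact Finset.mem_insert.2 (.inl (le_antisymm hak (hk ▸ Nat.sInf_le ⟨ha, has⟩)))

lemma Rejects.exists_forall_insert (hA : A.Infinite) (h : Rejects O s A) :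
    ∃ B ⊆ A, B.Infinite ∧ ∀ n ∈ B, Rejects O (insert n s) (B ∩ Ioi n) := by
  obtain ⟨b, hb, hbA, hP⟩ := exists_strictMono_fusion
    (fun t C => ∀ m ∈ t, Rejects O (insert m s) C) (fun hBA h m hm => (h m hm).mono hBA)
    hA (by simp) fun t C hC hCA hCinf => by
      obtain ⟨n, hn, C', hC', hC'inf, hrej⟩ := (h.mono hCA).exists_insert hCinf
      exact ⟨n, hn, C', hC', hC'inf, Finset.forall_mem_insert _ _ _ |>.2
        ⟨hrej, fun m hm => (hC m hm).mono (hC'.trans inter_subset_left)⟩⟩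
  refine ⟨_, hbA, infinite_range_of_injective hb.injective, ?_⟩
  rintro _ ⟨k, rfl⟩
  exact hP k (b k) (Finset.mem_image_of_mem b (Finset.self_mem_range_succ k))

lemma exists_forall_rejects_insert (U : Finset (Finset ℕ)) (hA : A.Infinite)
    (h : ∀ u ∈ U, Rejects O u A) :
    ∃ B ⊆ A, B.Infinite ∧ ∀ u ∈ U, ∀ n ∈ B, Rejects O (insert n u) (B ∩ Ioi n) := by
  classical
  induction U using Finset.induction_on generalizing A with
  | empty => exact ⟨A, subset_rfl, hA, by simp⟩
  | insert u U _ ih =>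
    rw [Finset.forall_mem_insert] at h
    obtain ⟨B₁, hB₁A, hB₁, hU⟩ := ih hA h.2
    obtain ⟨B, hBB₁, hB, hu⟩ := (h.1.mono hB₁A).exists_forall_insert hB₁
    refine ⟨B, hBB₁.trans hB₁A, hB, Finset.forall_mem_insert _ _ _ |>.2 ⟨hu, ?_⟩⟩
    exact fun v hv n hn => (hU v hv n (hBB₁ hn)).mono (inter_subset_inter_left _ hBB₁)

lemma Rejects.exists_strictMono (hA : A.Infinite) (h : Rejects O s A) :
    ∃ b : ℕ → ℕ, StrictMono b ∧ range b ⊆ A ∧ ∀ k, ∀ t ⊆ (Finset.range (k + 1)).image b,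
      Rejects O (s ∪ t) (range b ∩ Ioi (b k)) := by
  classical
  refine exists_strictMono_fusion (fun p C => ∀ t ⊆ p, Rejects O (s ∪ t) C)
    (fun hBA h t ht => (h t ht).mono hBA) hA (by simpa using h) fun p C hC _ hCinf => ?_
  obtain ⟨B, hBC, hB, hBrej⟩ := exists_forall_rejects_insert (p.powerset.image (s ∪ ·)) hCinf
    (by simpa using hC)
  have hn := Nat.sInf_mem hB.nonempty
  refine ⟨_, hBC hn, B ∩ Ioi (sInf B), inter_subset_inter_left _ hBC, hB.inter_Ioi _,
    fun t ht => ?_⟩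
  have hterase : t.erase (sInf B) ⊆ p := Finset.subset_insert_iff.1 ht
  by_cases htn : sInf B ∈ t
  · rw [← Finset.insert_erase htn, Finset.union_insert]
    exact hBrej _ (Finset.mem_image_of_mem _ (Finset.mem_powerset.2 hterase)) _ hn
  · rw [Finset.erase_eq_of_notMem htn] at hterase
    exact (hC t hterase).mono (inter_subset_left.trans hBC)

theorem _root_.IsOpen.exists_cube_subset_or_disjoint (hO : IsOpen O) (s : Finset ℕ)
    (hA : A.Infinite) : ∃ B ⊆ A, B.Infinite ∧ (cube s B ⊆ O ∨ Disjoint (cube s B) O) := by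
  by_cases hrej : Rejects O s A
  swap
  · simp only [Rejects, not_forall, not_not] at hrej
    obtain ⟨B, hBA, hB, hBO⟩ := hrej
    exact ⟨B, hBA, hB, .inl hBO⟩
  obtain ⟨b, hb, hbA, hP⟩ := hrej.exists_strictMono hA
  refine ⟨_, hbA, infinite_range_of_injective hb.injective,
    .inr (disjoint_left.2 fun x hx hxO => ?_)⟩
  -- `O` contains a cube around `x` whose stem is an initial segment `s ∪ t` of `x`, so the tail
  -- of `range b` above `t` would not reject `s ∪ t`.
  obtain ⟨_, ⟨⟨s₀, A₀⟩, rfl⟩, hx₀, hO₀⟩ := isTopologicalBasis_cube.isOpen_iff.1 hO x hxO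
  obtain ⟨t, ht, hxt, hxst⟩ := exists_mem_cube_union hx (b (s₀.sup id))
  rw [hb.range_inter_Iic] at ht
  refine hP _ t (Finset.coe_subset.1 ht) _ (sdiff_subset_of_mem_cube hxst)
    (x.2.sdiff (s ∪ t).finite_toSet) ((cube_sdiff_subset ?_ hxst.1 hx₀).trans hO₀)
  exact fun a ha => Finset.mem_coe.1 <|
    hxt ⟨hx₀.1 ha, (Finset.le_sup (f := id) ha).trans (hb.id_le _)⟩

lemma _root_.IsNowhereDense.exists_cube_disjoint {N : Set EllentuckSpace} (hN : IsNowhereDense N)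
    (s : Finset ℕ) (hA : A.Infinite) : ∃ B ⊆ A, B.Infinite ∧ Disjoint (cube s B) N := by
  obtain ⟨B, hBA, hB, hBN | hBN⟩ :=
    isClosed_closure.isOpen_compl.exists_cube_subset_or_disjoint (O := (closure N)ᶜ) s hA
  · exact ⟨B, hBA, hB, (disjoint_compl_right_iff_subset.2 subset_closure).symm.mono_left hBN⟩
  · have := interior_maximal (disjoint_compl_right_iff_subset.1 hBN) (isOpen_cube s B)
    rw [hN, subset_empty_iff] at this
    exact absurd this (cube_nonempty s hB).ne_empty

lemma exists_cube_disjoint_of_finset {ι : Type*} (I : Finset ι) (s : ι → Finset ℕ)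
    {N : ι → Set EllentuckSpace} (hN : ∀ i ∈ I, IsNowhereDense (N i)) (hA : A.Infinite) :
    ∃ B ⊆ A, B.Infinite ∧ ∀ i ∈ I, Disjoint (cube (s i) B) (N i) := by
  classical
  induction I using Finset.induction_on generalizing A with
  | empty => exact ⟨A, subset_rfl, hA, by simp⟩
  | insert i I _ ih =>
    rw [Finset.forall_mem_insert] at hN
    obtain ⟨B₁, hB₁A, hB₁, hI⟩ := ih hN.2 hA
    obtain ⟨B, hBB₁, hB, hi⟩ := hN.1.exists_cube_disjoint (s i) hB₁
    exact ⟨B, hBB₁.trans hB₁A, hB, Finset.forall_mem_insert _ _ _ |>.2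
      ⟨hi, fun j hj => (hI j hj).mono_left (cube_mono hBB₁)⟩⟩

lemma _root_.IsMeagre.exists_cube_disjoint {N : Set EllentuckSpace} (hN : IsMeagre N)
    (s : Finset ℕ) (hA : A.Infinite) : ∃ B ⊆ A, B.Infinite ∧ Disjoint (cube s B) N := by
  obtain ⟨F, hF, hNF⟩ := hN.exists_isNowhereDense_cover
  obtain ⟨b, hb, hbA, hP⟩ := exists_strictMono_fusion
    (fun p C => ∀ t ⊆ p, ∀ j < p.card, Disjoint (cube (s ∪ t) C) (F j))
    (fun hBA h t ht j hj => (h t ht j hj).mono_left (cube_mono hBA)) hA (by simp)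
    fun p C _ _ hCinf => by
      have hn := Nat.sInf_mem hCinf.nonempty
      obtain ⟨C', hC', hC'inf, hdisj⟩ := exists_cube_disjoint_of_finset
        ((insert (sInf C) p).powerset ×ˢ Finset.range (insert (sInf C) p).card)
        (fun q => s ∪ q.1) (N := fun q => F q.2) (fun q _ => hF q.2) (hCinf.inter_Ioi (sInf C))
      exact ⟨_, hn, C', hC', hC'inf, fun t ht j hj =>
        hdisj (t, j) (Finset.mem_product.2 ⟨Finset.mem_powerset.2 ht, Finset.mem_range.2 hj⟩)⟩
  refine ⟨_, hbA, infinite_range_of_injective hb.injective, disjoint_left.2 fun x hx hxN => ?_⟩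
  obtain ⟨j, hj⟩ := mem_iUnion.1 (hNF hxN)
  obtain ⟨t, ht, -, hxt⟩ := exists_mem_cube_union hx (b j)
  rw [hb.range_inter_Iic] at ht
  refine disjoint_left.1 (hP j t (Finset.coe_subset.1 ht) j ?_) hxt hj
  rw [Finset.card_image_of_injective _ hb.injective, Finset.card_range]
  exact j.lt_succ_self

theorem _root_.BaireMeasurableSet.exists_cube_subset_or_disjoint {S : Set EllentuckSpace}
    (hS : BaireMeasurableSet S) (s : Finset ℕ) (hA : A.Infinite) :
    ∃ B ⊆ A, B.Infinite ∧ (cube s B ⊆ S ∨ Disjoint (cube s B) S) := by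
  obtain ⟨U, hU, hSU⟩ := hS.residualEq_isOpen
  obtain ⟨B₁, hB₁A, hB₁, hB₁S⟩ :=
    (hSU.isMeagre_sdiff.union hSU.symm.isMeagre_sdiff).exists_cube_disjoint s hA
  obtain ⟨B, hBB₁, hB, hBU⟩ := hU.exists_cube_subset_or_disjoint s hB₁
  have hsymm : ∀ x ∈ cube s B, (x ∈ S ↔ x ∈ U) := fun x hx => by
    have := disjoint_left.1 hB₁S (cube_mono hBB₁ hx)
    simp only [mem_union, Set.mem_sdiff, not_or, not_and_not_right] at this
    exact ⟨this.1, this.2⟩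
  refine ⟨B, hBB₁.trans hB₁A, hB, hBU.imp (fun h x hx => (hsymm x hx).2 (h hx)) fun h => ?_⟩
  exact disjoint_left.2 fun x hx hxS => disjoint_left.1 h hx ((hsymm x hx).1 hxS)

end EllentuckSpace

theorem stmt12 (𝒳 : Set (ℕ → Bool)) (hA : MeasureTheory.AnalyticSet 𝒳)
    (M : Set ℕ) (hM : M.Infinite) :
    ∃ N : Set ℕ, N ⊆ M ∧ N.Infinite ∧
      ((∀ S : ℕ → Bool, {n | S n = true}.Infinite → {n | S n = true} ⊆ N → S ∈ 𝒳) ∨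
       (∀ S : ℕ → Bool, {n | S n = true}.Infinite → {n | S n = true} ⊆ N → S ∉ 𝒳)) := by
  obtain ⟨N, hNM, hN, h⟩ := (hA.baireMeasurableSet_preimage
    EllentuckSpace.continuous_boolIndicator).exists_cube_subset_or_disjoint ∅ hM
  have hind : ∀ S hS, (⟨{n | S n = true}, hS⟩ : EllentuckSpace).1.boolIndicator = S :=
    fun S _ => funext fun n => by simp [Set.boolIndicator]
  refine ⟨N, hNM, hN, h.imp (fun h S hS hSN => ?_) fun h S hS hSN hSX => ?_⟩
  · exact hind S hS ▸ h (EllentuckSpace.mem_cube_empty.2 hSN)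
  · exact disjoint_left.1 h (EllentuckSpace.mem_cube_empty.2 hSN) ((hind S hS).symm ▸ hSX)
end

section
/- Let G = (P, X, d, ≤, ≤*, ◁) be an approximate Gowers space satisfying the pigeonhole principle. Let 𝒳 ⊆ X^ω, p ∈ P, and Δ = (Δ_n) be a sequence of positive reals. If player II has a strategy in Gowers' game G_p to reach 𝒳, then there exists q ≤ p such that player I has a strategy in the asymptotic game F_q to reach (𝒳)_Δ. -/
open MeasureTheory Filter Topology TopologicalSpace

/-! ## Approximate Gowers spaces -/

structure ApproxGowersSpace (P : Type*) (X : Type*) where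
  le : P → P → Prop
  les : P → P → Prop
  tri : X → P → Prop
  le_refl : ∀ p, le p p
  le_trans : ∀ p q r, le p q → le q r → le p r
  les_refl : ∀ p, les p p
  les_trans : ∀ p q r, les p q → les q r → les p r
  le_imp_les : ∀ p q, le p q → les p q
  diag : ∀ p q, les p q → ∃ r, le r p ∧ le r q ∧ les p r
  decseq : ∀ f : ℕ → P, (∀ n, le (f (n + 1)) (f n)) → ∃ p, ∀ n, les p (f n)
  ext : ∀ p : P, ∃ x, tri x p
  mono : ∀ (x : X) (p q : P), tri x p → le p q → tri x q

/-- The `Δ`-expansion of a set of sequences in a metric space. -/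
def expandSeq {X : Type*} [MetricSpace X] (Δ : ℕ → ℝ) (Y : Set (ℕ → X)) : Set (ℕ → X) :=
  {x | ∃ y ∈ Y, ∀ n, dist (x n) (y n) ≤ Δ n}

namespace ApproxGowersSpace

variable {P X : Type*} (G : ApproxGowersSpace P X)

def lap (q p : P) : Prop := G.le q p ∧ G.les p q

/-- Player I has a strategy in the asymptotic game `F_p` to reach `Y`. -/
def IStratF (p : P) (Y : Set (ℕ → X)) : Prop :=
  ∃ σ : List X → P, (∀ s, G.lap (σ s) p) ∧
    ∀ x : ℕ → X, (∀ n, G.tri (x n) (σ (preSeq x n))) → x ∈ Y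

/-- Player II has a strategy in Gowers' game `G_p` to reach `Y`. -/
def IIStratG (p : P) (Y : Set (ℕ → X)) : Prop :=
  ∃ τ : List P → X, ∀ f : ℕ → P, (∀ n, G.le (f n) p) →
    (∀ n, G.tri (gOut τ f n) (f n)) ∧ gOut τ f ∈ Y

def advI (σ : P → List (X × P) → X × P) (p0 : P) (g : ℕ → X × P) (n : ℕ) : X × P :=
  σ p0 ((List.range n).map g)

def advIIps (p0 : P) (g : ℕ → X × P) : ℕ → P :=
  fun n => Nat.rec (motive := fun _ => P) p0 (fun k _ => (g k).2) n

def advIOut (σ : P → List (X × P) → X × P) (p0 : P) (g : ℕ → X × P) : ℕ → X :=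
  itl (fun n => (advI σ p0 g n).1) (fun n => (g n).1)

/-- Player I has a strategy in the game `A_p` to reach `Y`. -/
def IStratA (p : P) (Y : Set (ℕ → X)) : Prop :=
  ∃ σ : P → List (X × P) → X × P,
    (∀ p0 g n, G.tri (advI σ p0 g n).1 (advIIps p0 g n) ∧ G.lap (advI σ p0 g n).2 p) ∧
    ∀ p0 g, (∀ n, G.le (advIIps p0 g n) p) →
      (∀ n, G.tri (g n).1 ((advI σ p0 g n).2)) →
      advIOut σ p0 g ∈ Y

def advII (τ : List (X × P) → X × P) (h : ℕ → X × P) (n : ℕ) : X × P :=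
  τ ((List.range (n + 1)).map h)

def advIIpsB (p0 : P) (τ : List (X × P) → X × P) (h : ℕ → X × P) : ℕ → P :=
  fun n => Nat.rec (motive := fun _ => P) p0 (fun k _ => (advII τ h k).2) n

def advIIOut (τ : List (X × P) → X × P) (h : ℕ → X × P) : ℕ → X :=
  itl (fun n => (h n).1) (fun n => (advII τ h n).1)

/-- Player II has a strategy in the game `B_p` to reach `Y`. -/
def IIStratB (p : P) (Y : Set (ℕ → X)) : Prop :=
  ∃ (p0 : P) (τ : List (X × P) → X × P), G.lap p0 p ∧
    (∀ h n, G.tri (advII τ h n).1 ((h n).2) ∧ G.lap (advIIpsB p0 τ h (n + 1)) p) ∧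
    ∀ h : ℕ → X × P,
      (∀ n, G.tri (h n).1 (advIIpsB p0 τ h n) ∧ G.le ((h n).2) p) →
      advIIOut τ h ∈ Y

/-- The (approximate) pigeonhole principle. -/
def Pigeonhole [MetricSpace X] : Prop :=
  ∀ (p : P) (A : Set X) (δ : ℝ), 0 < δ → ∃ q, G.le q p ∧
    ((∀ x, G.tri x q → x ∉ A) ∨ ∀ x, G.tri x q → ∃ y ∈ A, dist x y ≤ δ)

/-- A set is strategically Ramsey (approximate version). -/
def StrategicallyRamsey [MetricSpace X] (Y : Set (ℕ → X)) : Prop :=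
  ∀ (Δ : ℕ → ℝ), (∀ n, 0 < Δ n) → ∀ p : P, ∃ q, G.le q p ∧
    (G.IStratF q Yᶜ ∨ G.IIStratG q (expandSeq Δ Y))

end ApproxGowersSpace

/-! ## Approximate asymptotic spaces and systems of precompact sets -/

structure ApproxAsympSpace (P : Type*) (X : Type*) where
  lap : P → P → Prop
  lap_refl : ∀ p, lap p p
  lap_trans : ∀ p q r, lap p q → lap q r → lap p r
  tri : X → P → Prop
  diag : ∀ p q r, lap q p → lap r p → ∃ u, lap u q ∧ lap u r
  ext : ∀ p : P, ∃ x, tri x p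
  mono : ∀ (x : X) (p q : P), tri x p → lap p q → tri x q

namespace ApproxAsympSpace

variable {P X : Type*} (A : ApproxAsympSpace P X)

/-- `K ◁ p` for a set `K`: the points of `K` related to `p` are dense in `K`. -/
def denseIn [MetricSpace X] (K : Set X) (p : P) : Prop :=
  K ⊆ closure {x | x ∈ K ∧ A.tri x p}

/-- Player I has a strategy in the asymptotic game `F_p` to reach `Y`. -/
def IStratF (p : P) (Y : Set (ℕ → X)) : Prop :=
  ∃ σ : List X → P, (∀ s, A.lap (σ s) p) ∧
    ∀ x : ℕ → X, (∀ n, A.tri (x n) (σ (preSeq x n))) → x ∈ Y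

/-- Player I has a strategy in the strong asymptotic game `SF_p` (where II plays sets in `𝒦`)
to build a sequence satisfying `Φ`. -/
def IStratSF [MetricSpace X] (𝒦 : Set (Set X)) (p : P) (Φ : (ℕ → Set X) → Prop) : Prop :=
  ∃ σ : List (Set X) → P, (∀ s, A.lap (σ s) p) ∧
    ∀ Ks : ℕ → Set X, (∀ n, Ks n ∈ 𝒦 ∧ A.denseIn (Ks n) (σ (preSeq Ks n))) → Φ Ks

end ApproxAsympSpace

/-- A system of precompact sets for an approximate asymptotic space. -/
structure PrecompactSystem {P X : Type*} [MetricSpace X] (A : ApproxAsympSpace P X) where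
  mem : Set (Set X)
  precompact : ∀ K ∈ mem, IsCompact (closure K)
  op : Set X → Set X → Set X
  op_mem : ∀ K ∈ mem, ∀ L ∈ mem, op K L ∈ mem
  op_assoc : ∀ K ∈ mem, ∀ L ∈ mem, ∀ M ∈ mem, op (op K L) M = op K (op L M)
  compat : ∀ (p : P), ∀ K ∈ mem, ∀ L ∈ mem,
    A.denseIn K p → A.denseIn L p → A.denseIn (op K L) p

/-- `⊕_{n ∈ A} K n`, for a finite nonempty set `A` of integers (taken in increasing order). -/
def sysSum {X : Type*} (op : Set X → Set X → Set X) (K : ℕ → Set X) (A : Finset ℕ) : Set X :=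
  match A.sort (· ≤ ·) with
  | [] => ∅
  | a :: t => t.foldl (fun S n => op S (K n)) (K a)

/-- Block sequences of a sequence `(K_n)` of sets, relative to the operation `op`. -/
def IsBlockSeqOf {X : Type*} (op : Set X → Set X → Set X) (K : ℕ → Set X) (x : ℕ → X) : Prop :=
  ∃ A : ℕ → Finset ℕ, (∀ i, (A i).Nonempty) ∧
    (∀ i, ∀ m ∈ A i, ∀ m' ∈ A (i + 1), m < m') ∧
    ∀ i, x i ∈ sysSum op K (A i)

/-- The approximate asymptotic space underlying an approximate Gowers space. -/
def ApproxGowersSpace.toAsymp {P X : Type*} (G : ApproxGowersSpace P X) :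
    ApproxAsympSpace P X where
  lap := G.lap
  lap_refl := fun p => ⟨G.le_refl p, G.les_refl p⟩
  lap_trans := fun p q r h1 h2 => ⟨G.le_trans _ _ _ h1.1 h2.1, G.les_trans _ _ _ h2.2 h1.2⟩
  tri := G.tri
  diag := fun p q r hq hr => by
    obtain ⟨u, hu1, hu2, hu3⟩ :=
      G.diag q r (G.les_trans _ _ _ (G.le_imp_les _ _ hq.1) hr.2)
    exact ⟨u, ⟨hu1, hu3⟩,
      ⟨hu2, G.les_trans _ _ _ (G.les_trans _ _ _ (G.le_imp_les _ _ hr.1) hq.2) hu3⟩⟩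
  ext := G.ext
  mono := fun x p q h hpq => G.mono x p q h hpq.1

theorem length_preSeq {X : Type*} (x : ℕ → X) (n : ℕ) : (preSeq x n).length = n := by
  simp [preSeq]

theorem mapIdx_preSeq {X Y : Type*} (f : ℕ → X → Y) (x : ℕ → X) (n : ℕ) :
    (preSeq x n).mapIdx f = preSeq (fun i => f i (x i)) n := by
  induction n with
  | zero => rfl
  | succ n ih => simp [preSeq_succ, List.mapIdx_append, ih, length_preSeq]

theorem gOut_eq {Q X : Type*} (τ : List Q → X) (f : ℕ → Q) (n : ℕ) :
    gOut τ f n = τ (preSeq f n ++ [f n]) := by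
  rw [← preSeq_succ]
  rfl

namespace ApproxGowersSpace

variable {P X : Type*} (G : ApproxGowersSpace P X)

/-- The paper's `q ⊆ A`. -/
def Inside (q : P) (A : Set X) : Prop := ∀ x, G.tri x q → x ∈ A

variable {G}

theorem Inside.of_le {q r : P} {A : Set X} (h : G.Inside q A) (hrq : G.le r q) : G.Inside r A :=
  fun x hx => h x (G.mono x r q hx hrq)

theorem exists_lap_le_of_les {q r : P} (h : G.les q r) : ∃ u, G.lap u q ∧ G.le u r := by
  obtain ⟨u, huq, hur, hqu⟩ := G.diag q r h
  exact ⟨u, ⟨huq, hqu⟩, hur⟩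

theorem exists_le_forall_exists_lap_inside_nat (p : P) (A : ℕ → Set X)
    (hA : ∀ k q, G.le q p → ∃ r, G.le r q ∧ G.Inside r (A k)) :
    ∃ q, G.le q p ∧ ∀ k, ∃ r, G.lap r q ∧ G.Inside r (A k) := by
  have step : ∀ k (q : {q // G.le q p}),
      ∃ r : {r // G.le r p}, G.le r.1 q.1 ∧ G.Inside r.1 (A k) := by
    intro k q
    obtain ⟨r, hrq, hr⟩ := hA k q.1 q.2
    exact ⟨⟨r, G.le_trans _ _ _ hrq q.2⟩, hrq, hr⟩
  choose next next_le next_inside using step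
  let Q : ℕ → {q // G.le q p} := fun k => Nat.rec ⟨p, G.le_refl p⟩ next k
  obtain ⟨q₀, hq₀⟩ := G.decseq (fun k => (Q k).1) fun k => next_le k (Q k)
  obtain ⟨q, hqq₀, hqp, -⟩ := G.diag q₀ p (hq₀ 0)
  refine ⟨q, hqp, fun k => ?_⟩
  obtain ⟨r, hrq, hrQ⟩ :=
    exists_lap_le_of_les (G.les_trans _ _ _ (G.le_imp_les _ _ hqq₀) (hq₀ (k + 1)))
  exact ⟨r, hrq, (next_inside k (Q k)).of_le hrQ⟩

theorem exists_le_forall_exists_lap_inside {ι : Type*} [Countable ι] [Nonempty ι] (p : P)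
    (A : ι → Set X) (hA : ∀ i q, G.le q p → ∃ r, G.le r q ∧ G.Inside r (A i)) :
    ∃ q, G.le q p ∧ ∀ i, ∃ r, G.lap r q ∧ G.Inside r (A i) := by
  obtain ⟨e, he⟩ := exists_surjective_nat ι
  obtain ⟨q, hqp, hq⟩ := exists_le_forall_exists_lap_inside_nat p (A ∘ e) fun k => hA (e k)
  refine ⟨q, hqp, fun i => ?_⟩
  obtain ⟨k, rfl⟩ := he i
  exact hq k

theorem tri_append_of_strategy {p : P} {τ : List P → X}
    (hτ : ∀ f : ℕ → P, (∀ n, G.le (f n) p) → ∀ n, G.tri (gOut τ f n) (f n))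
    {s : List P} (hs : ∀ a ∈ s, G.le a p) {r : P} (hr : G.le r p) :
    G.tri (τ (s ++ [r])) r := by
  let f : ℕ → P := fun i => (s ++ [r]).getD i p
  have hf : ∀ n, G.le (f n) p := by
    intro n
    simp only [f, List.getD_eq_getElem?_getD]
    cases h : (s ++ [r])[n]? with
    | none => exact G.le_refl p
    | some a =>
      rcases List.mem_append.1 (List.mem_of_getElem? h) with ha | ha
      · exact hs a ha
      · rw [List.mem_singleton.1 ha]
        exact hr
  have hs' : preSeq f s.length = s := by
    apply List.ext_getElem (length_preSeq f _)
    intro i _ hi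
    simp [preSeq, f, List.getElem?_append_left hi, List.getElem?_eq_getElem hi]
  have h := hτ f hf s.length
  rw [gOut_eq, hs'] at h
  simpa [f] using h

section Metric

variable [MetricSpace X]

/-- The paper's `(A_s)_δ`, where `A_s` is the set of answers of `τ` at the position `s`. -/
def nearAnswers (G : ApproxGowersSpace P X) (τ : List P → X) (p : P) (s : List P) (δ : ℝ) :
    Set X :=
  {x | ∃ v, G.le v p ∧ dist x (τ (s ++ [v])) ≤ δ}

theorem Pigeonhole.exists_le_inside_nearAnswers (hPH : G.Pigeonhole) {p : P} {τ : List P → X}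
    (hτ : ∀ f : ℕ → P, (∀ n, G.le (f n) p) → ∀ n, G.tri (gOut τ f n) (f n))
    {s : List P} (hs : ∀ a ∈ s, G.le a p) {δ : ℝ} (hδ : 0 < δ) {q : P} (hq : G.le q p) :
    ∃ r, G.le r q ∧ G.Inside r (nearAnswers G τ p s δ) := by
  obtain ⟨r, hrq, hr | hr⟩ :=
    hPH q (Set.range fun v : {v // G.le v p} => τ (s ++ [v.1])) δ hδ
  · have hrp := G.le_trans _ _ _ hrq hq
    exact absurd ⟨⟨r, hrp⟩, rfl⟩ (hr _ (tri_append_of_strategy hτ hs hrp))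
  · refine ⟨r, hrq, fun x hx => ?_⟩
    obtain ⟨_, ⟨⟨v, hv⟩, rfl⟩, hxv⟩ := hr x hx
    exact ⟨v, hv, hxv⟩

variable (G) (τ : List P → X) (p : P) (u : ℕ → X) (ε : ℕ → ℝ)

-- The fallback `p` only makes the move total; it is never reached along the simulated runs.
open Classical in
noncomputable def simMove (s : List P) (d : ℕ) : P :=
  if h : u d ∈ nearAnswers G τ p s (2 * ε s.length) then h.choose else p

noncomputable def simPos (t : List ℕ) : List P :=
  t.foldl (fun s d => s ++ [simMove G τ p u ε s d]) []

noncomputable def simPlay (a : ℕ → ℕ) (n : ℕ) : P :=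
  simMove G τ p u ε (simPos G τ p u ε (preSeq a n)) (a n)

variable {G τ p u ε}

theorem simMove_le (s : List P) (d : ℕ) : G.le (simMove G τ p u ε s d) p := by
  unfold simMove
  split_ifs with h
  exacts [h.choose_spec.1, G.le_refl p]

theorem simPos_append_singleton (t : List ℕ) (d : ℕ) :
    simPos G τ p u ε (t ++ [d]) =
      simPos G τ p u ε t ++ [simMove G τ p u ε (simPos G τ p u ε t) d] :=
  List.foldl_concat ..

theorem le_of_mem_simPos (t : List ℕ) : ∀ a ∈ simPos G τ p u ε t, G.le a p := by
  induction t using List.reverseRecOn with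
  | nil => simp [simPos]
  | append_singleton t d ih =>
    rw [simPos_append_singleton]
    intro a ha
    rcases List.mem_append.1 ha with ha | ha
    · exact ih a ha
    · rw [List.mem_singleton.1 ha]
      exact simMove_le _ _

theorem simPos_preSeq (a : ℕ → ℕ) (n : ℕ) :
    simPos G τ p u ε (preSeq a n) = preSeq (simPlay G τ p u ε a) n := by
  induction n with
  | zero => rfl
  | succ n ih => rw [preSeq_succ, simPos_append_singleton, preSeq_succ, ← ih]; rfl

theorem dist_simMove_le {s : List P} {d : ℕ} {x : X} (hxu : dist x (u d) ≤ ε s.length)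
    (hx : x ∈ nearAnswers G τ p s (ε s.length)) :
    dist x (τ (s ++ [simMove G τ p u ε s d])) ≤ 3 * ε s.length := by
  obtain ⟨v, hv, hxv⟩ := hx
  have hu : u d ∈ nearAnswers G τ p s (2 * ε s.length) :=
    ⟨v, hv, by linarith [dist_triangle_left (u d) (τ (s ++ [v])) x]⟩
  have hmove : dist (u d) (τ (s ++ [simMove G τ p u ε s d])) ≤ 2 * ε s.length := by
    rw [simMove, dif_pos hu]
    exact hu.choose_spec.2
  linarith [dist_triangle x (u d) (τ (s ++ [simMove G τ p u ε s d]))]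

theorem dist_gOut_simPlay_le {x : ℕ → X} {a : ℕ → ℕ}
    (hxu : ∀ n, dist (x n) (u (a n)) ≤ ε n)
    (hx : ∀ n, x n ∈ nearAnswers G τ p (simPos G τ p u ε (preSeq a n)) (ε n)) (n : ℕ) :
    dist (x n) (gOut τ (simPlay G τ p u ε a) n) ≤ 3 * ε n := by
  have hlen : (simPos G τ p u ε (preSeq a n)).length = n := by
    rw [simPos_preSeq, length_preSeq]
  have h := dist_simMove_le (d := a n) (s := simPos G τ p u ε (preSeq a n))
    (by rw [hlen]; exact hxu n) (by rw [hlen]; exact hx n)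
  rw [hlen] at h
  rw [gOut_eq, ← simPos_preSeq]
  exact h

end Metric

end ApproxGowersSpace

open ApproxGowersSpace

theorem stmt15_general {P X : Type} [MetricSpace X] [Nonempty X] [PolishSpace X]
    (G : ApproxGowersSpace P X) (hPH : G.Pigeonhole)
    (𝒳 : Set (ℕ → X)) (p : P) (Δ : ℕ → ℝ) (hΔ : ∀ n, 0 < Δ n)
    (h : G.IIStratG p 𝒳) :
    ∃ q, G.le q p ∧ G.IStratF q (expandSeq Δ 𝒳) := by
  obtain ⟨τ, hτ⟩ := h
  let ε : ℕ → ℝ := fun n => Δ n / 3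
  have hε : ∀ n, 0 < ε n := fun n => div_pos (hΔ n) three_pos
  let u := denseSeq X
  have hu : ∀ n x, ∃ k, dist x (u k) ≤ ε n := fun n x =>
    ((denseRange_denseSeq X).exists_dist_lt x (hε n)).imp fun _ => le_of_lt
  choose idx hidx using hu
  let A : List ℕ → Set X := fun t => nearAnswers G τ p (simPos G τ p u ε t) (ε t.length)
  obtain ⟨q, hqp, hq⟩ := exists_le_forall_exists_lap_inside p A fun t _ =>
    hPH.exists_le_inside_nearAnswers (fun f hf => (hτ f hf).1) (le_of_mem_simPos t) (hε _)
  choose R hRq hRA using hq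
  refine ⟨q, hqp, fun xs => R (xs.mapIdx idx), fun _ => hRq _, fun x hx => ?_⟩
  let a : ℕ → ℕ := fun n => idx n (x n)
  have hxA : ∀ n, x n ∈ A (preSeq a n) := fun n =>
    hRA _ _ (by simpa only [mapIdx_preSeq] using hx n)
  refine ⟨gOut τ (simPlay G τ p u ε a), (hτ _ fun _ => simMove_le _ _).2, fun n => ?_⟩
  calc _ ≤ 3 * ε n := dist_gOut_simPlay_le (fun n => hidx n (x n))
        (fun n => by simpa only [A, length_preSeq] using hxA n) n
    _ = Δ n := by ring

theorem stmt15 {P X : Type} [Nonempty P] [MetricSpace X] [Nonempty X] [PolishSpace X]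
    (G : ApproxGowersSpace P X) (hPH : G.Pigeonhole)
    (𝒳 : Set (ℕ → X)) (p : P) (Δ : ℕ → ℝ) (hΔ : ∀ n, 0 < Δ n)
    (h : G.IIStratG p 𝒳) :
    ∃ q, G.le q p ∧ G.IStratF q (expandSeq Δ 𝒳) :=
  stmt15_general G hPH 𝒳 p Δ hΔ h
end

section
/- Let 𝒜 = (P, X, d, ⪅, ◁) be an approximate asymptotic space equipped with a system of precompact sets (𝒦, ⊕), let p ∈ P, 𝒳 ⊆ X^ω, and Δ = (Δ_n) a sequence of positive reals. If player I has a strategy in the asymptotic game F_p to reach 𝒳, then player I has a strategy in the strong asymptotic game SF_p to build a sequence (K_n)_{n∈ω} such that every block sequence of (K_n)_{n∈ω} belongs to (𝒳)_Δ. -/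
open MeasureTheory Filter Topology TopologicalSpace

/-! Player I plays conditions `p_0 ⪆ p_1 ⪆ …` and collects finite sets of points `Z_1 ⊆ Z_2 ⊆ …`.
Once `K_0, …, K_{n-1}` are played, every `⊕_{m ∈ B} K_m` with `B ⊆ [j, n)` is precompact and
`◁ p_j`, so it has a finite `ε_j`-net of points `◁ p_j`; these nets form `Z_n`, and `p_n` refines
`p_{n-1}` and every answer `σ t` of I's strategy in `F_p` to a sequence `t` of length `≤ n` from
`Z_n`. A block sequence `(x_i)` whose `i`-th block starts at `μ_i ≥ i` is then shadowed by net
points `z_i ◁ p_{μ_i} ⪅ σ (z_0, …, z_{i-1})`: `(z_i)` follows `σ`, so lies in `𝒳`, and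
`d(x_i, z_i) ≤ ε_{μ_i} ≤ Δ_i` for `ε_j = min_{i ≤ j} Δ_i`. -/

open Metric

theorem exists_finite_subset_cover_closedBall {X : Type*} [PseudoMetricSpace X] {D K : Set X}
    (hD : TotallyBounded D) (hK : K ⊆ closure D) {δ : ℝ} (hδ : 0 < δ) :
    ∃ F ⊆ D, F.Finite ∧ K ⊆ ⋃ z ∈ F, closedBall z δ := by
  obtain ⟨F, hFD, hF, hcover⟩ := finite_approx_of_totallyBounded hD δ hδ
  refine ⟨F, hFD, hF, hK.trans (closure_minimal (hcover.trans ?_)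
    (hF.isClosed_biUnion fun _ _ => isClosed_closedBall))⟩
  exact Set.iUnion₂_mono fun z _ => ball_subset_closedBall

section FiniteNet

variable {X : Type*} [PseudoMetricSpace X] {D K : Set X} {δ : ℝ}

noncomputable def finiteNet (D K : Set X) (δ : ℝ) : Set X :=
  open Classical in
  if h : ∃ F ⊆ D, F.Finite ∧ K ⊆ ⋃ z ∈ F, closedBall z δ then h.choose else ∅

theorem finiteNet_finite : (finiteNet D K δ).Finite := by
  unfold finiteNet
  split_ifs with h
  exacts [h.choose_spec.2.1, Set.finite_empty]

theorem finiteNet_subset : finiteNet D K δ ⊆ D := by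
  unfold finiteNet
  split_ifs with h
  exacts [h.choose_spec.1, Set.empty_subset D]

theorem exists_mem_finiteNet (hD : TotallyBounded D) (hK : K ⊆ closure D) (hδ : 0 < δ)
    {x : X} (hx : x ∈ K) : ∃ z ∈ finiteNet D K δ, dist x z ≤ δ := by
  have h := exists_finite_subset_cover_closedBall hD hK hδ
  rw [finiteNet, dif_pos h]
  simpa only [Set.mem_iUnion₂, mem_closedBall, exists_prop] using h.choose_spec.2.2 hx

end FiniteNet

def shortLists {X : Type*} (n : ℕ) (Z : Set X) : Set (List X) :=
  {t | t.length ≤ n ∧ ∀ z ∈ t, z ∈ Z}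

theorem Set.Finite.shortLists {X : Type*} {Z : Set X} (hZ : Z.Finite) (n : ℕ) :
    (_root_.shortLists n Z).Finite := by
  have := hZ.to_subtype
  refine ((List.finite_length_le Z n).image (List.map Subtype.val)).subset ?_
  rintro t ⟨hlen, hmem⟩
  lift t to List Z using hmem
  exact ⟨t, by simpa using hlen, rfl⟩

namespace ApproxAsympSpace

variable {P X : Type*} (A : ApproxAsympSpace P X)

theorem exists_lap_forall_of_finite {p q : P} {s : Set P} (hs : s.Finite) (hq : A.lap q p)
    (hsp : ∀ r ∈ s, A.lap r p) : ∃ u, A.lap u q ∧ ∀ r ∈ s, A.lap u r := by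
  induction s, hs using Set.Finite.induction_on with
  | empty => exact ⟨q, A.lap_refl q, by simp⟩
  | @insert r s _ _ ih =>
    obtain ⟨u, huq, hus⟩ := ih fun r' hr' => hsp r' (Set.mem_insert_of_mem r hr')
    obtain ⟨v, hvu, hvr⟩ := A.diag p u r (A.lap_trans _ _ _ huq hq) (hsp r (Set.mem_insert r s))
    refine ⟨v, A.lap_trans _ _ _ hvu huq, ?_⟩
    rintro r' (rfl | hr')
    exacts [hvr, A.lap_trans _ _ _ hvu (hus r' hr')]

noncomputable def refine (q : P) (s : Set P) : P :=
  open Classical in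
  if h : ∃ u, A.lap u q ∧ ∀ r ∈ s, A.lap u r then h.choose else q

theorem refine_lap (q : P) (s : Set P) : A.lap (A.refine q s) q := by
  unfold refine
  split_ifs with h
  exacts [h.choose_spec.1, A.lap_refl q]

theorem refine_lap_of_mem {p q : P} {s : Set P} (hs : s.Finite) (hq : A.lap q p)
    (hsp : ∀ r ∈ s, A.lap r p) {r : P} (hr : r ∈ s) : A.lap (A.refine q s) r := by
  have h := A.exists_lap_forall_of_finite hs hq hsp
  rw [refine, dif_pos h]
  exact h.choose_spec.2 r hr

theorem denseIn_of_lap [MetricSpace X] {K : Set X} {q q' : P} (h : A.denseIn K q)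
    (hq : A.lap q q') : A.denseIn K q' :=
  h.trans (closure_mono fun _ hx => ⟨hx.1, A.mono _ _ _ hx.2 hq⟩)

end ApproxAsympSpace

section SysSum

variable {X : Type*} {op : Set X → Set X → Set X} {K : ℕ → Set X} {B : Finset ℕ}

theorem sysSum_congr {K' : ℕ → Set X} (h : ∀ m ∈ B, K m = K' m) :
    sysSum op K B = sysSum op K' B := by
  have hsort : ∀ m ∈ B.sort (· ≤ ·), K m = K' m := fun m hm => h m ((B.mem_sort _).1 hm)
  unfold sysSum
  split
  · rfl
  · next a t hs =>
    rw [hs] at hsort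
    rw [hsort a List.mem_cons_self]
    exact List.foldl_ext _ _ _ fun L m hm => by rw [hsort m (List.mem_cons_of_mem a hm)]

theorem sysSum_induction (Q : Set X → Prop) (hop : ∀ L M, Q L → Q M → Q (op L M))
    (hK : ∀ m ∈ B, Q (K m)) (hB : B.Nonempty) : Q (sysSum op K B) := by
  have hsort : ∀ m ∈ B.sort (· ≤ ·), Q (K m) := fun m hm => hK m ((B.mem_sort _).1 hm)
  unfold sysSum
  split
  · next hs =>
    obtain ⟨m, hm⟩ := hB
    simpa [hs] using (B.mem_sort (· ≤ ·)).2 hm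
  · next a t hs =>
    rw [hs] at hsort
    have key : ∀ (l : List ℕ) (L : Set X), Q L → (∀ m ∈ l, Q (K m)) →
        Q (l.foldl (fun L n => op L (K n)) L) := by
      intro l
      induction l with
      | nil => exact fun L hL _ => hL
      | cons m l ih =>
        exact fun L hL hl => ih _ (hop _ _ hL (hl m List.mem_cons_self))
          fun m' hm' => hl m' (List.mem_cons_of_mem m hm')
    exact key t _ (hsort a List.mem_cons_self) fun m hm => hsort m (List.mem_cons_of_mem a hm)

end SysSum

theorem PrecompactSystem.sysSum_mem_denseIn {P X : Type*} [MetricSpace X]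
    {A : ApproxAsympSpace P X} (S : PrecompactSystem A) {K : ℕ → Set X} {B : Finset ℕ} {q : P}
    (hB : B.Nonempty) (hK : ∀ m ∈ B, K m ∈ S.mem ∧ A.denseIn (K m) q) :
    sysSum S.op K B ∈ S.mem ∧ A.denseIn (sysSum S.op K B) q :=
  sysSum_induction (fun L => L ∈ S.mem ∧ A.denseIn L q)
    (fun _ _ hL hM => ⟨S.op_mem _ hL.1 _ hM.1, S.compat q _ hL.1 _ hM.1 hL.2 hM.2⟩) hK hB

namespace PrecompactSystem

variable {P X : Type*} [MetricSpace X] {A : ApproxAsympSpace P X} (S : PrecompactSystem A)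
  (σ : List X → P) (ε : ℕ → ℝ) (Ks : ℕ → Set X)

noncomputable def anchoredNet (j n : ℕ) (q : P) : Set X :=
  ⋃ B ∈ (Finset.Ico j n).powerset,
    finiteNet {x | x ∈ sysSum S.op Ks B ∧ A.tri x q} (sysSum S.op Ks B) (ε j)

noncomputable def move : ℕ → P
  | 0 => σ []
  | n + 1 => A.refine (move n) (σ '' shortLists (n + 1)
      (⋃ j : Fin (n + 1), S.anchoredNet ε Ks j (n + 1) (move j)))

noncomputable def netPoints (n : ℕ) : Set X :=
  ⋃ j : Fin n, S.anchoredNet ε Ks j n (S.move σ ε Ks j)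

theorem move_zero : S.move σ ε Ks 0 = σ [] := by
  rw [move]

theorem move_succ (n : ℕ) :
    S.move σ ε Ks (n + 1) =
      A.refine (S.move σ ε Ks n) (σ '' shortLists (n + 1) (S.netPoints σ ε Ks (n + 1))) := by
  rw [move]
  rfl

theorem anchoredNet_finite (j n : ℕ) (q : P) : (S.anchoredNet ε Ks j n q).Finite :=
  (Finset.finite_toSet _).biUnion fun _ _ => finiteNet_finite

theorem netPoints_finite (n : ℕ) : (S.netPoints σ ε Ks n).Finite :=
  Set.finite_iUnion fun _ => S.anchoredNet_finite ε Ks _ _ _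

theorem netPoints_mono {m n : ℕ} (h : m ≤ n) :
    S.netPoints σ ε Ks m ⊆ S.netPoints σ ε Ks n := by
  refine Set.iUnion_subset fun j => ?_
  refine Set.Subset.trans ?_ (Set.subset_iUnion _ (Fin.castLE h j))
  exact Set.biUnion_subset_biUnion_left fun B hB =>
    Finset.powerset_mono.2 (Finset.Ico_subset_Ico_right h) hB

theorem move_lap_move_of_le {j n : ℕ} (h : j ≤ n) :
    A.lap (S.move σ ε Ks n) (S.move σ ε Ks j) := by
  induction n, h using Nat.le_induction with
  | base => exact A.lap_refl _
  | succ n _ ih => exact A.lap_trans _ _ _ (by rw [move_succ]; exact A.refine_lap _ _) ih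

theorem anchoredNet_congr {Ks' : ℕ → Set X} {n : ℕ} (h : ∀ i < n, Ks i = Ks' i) (j : ℕ)
    (q : P) : S.anchoredNet ε Ks j n q = S.anchoredNet ε Ks' j n q :=
  Set.iUnion₂_congr fun _ hB => by
    rw [sysSum_congr fun m hm => h m (Finset.mem_Ico.1 (Finset.mem_powerset.1 hB hm)).2]

theorem move_congr {Ks' : ℕ → Set X} {n : ℕ} (h : ∀ i < n, Ks i = Ks' i) :
    S.move σ ε Ks n = S.move σ ε Ks' n := by
  induction n using Nat.strong_induction_on with
  | _ n ih =>
    cases n with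
    | zero => rw [move_zero, move_zero]
    | succ n =>
      have hmove : ∀ j < n + 1, S.move σ ε Ks j = S.move σ ε Ks' j :=
        fun j hj => ih j hj fun i hi => h i (hi.trans hj)
      have hnet : S.netPoints σ ε Ks (n + 1) = S.netPoints σ ε Ks' (n + 1) :=
        Set.iUnion_congr fun j => by rw [hmove j j.isLt, S.anchoredNet_congr ε Ks h]
      rw [move_succ, move_succ, hnet, hmove n n.lt_succ_self]

-- `move Ks n` only depends on `Ks 0, …, Ks (n-1)` (`move_congr`), so it can be read off the history.
noncomputable def strategy (s : List (Set X)) : P :=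
  S.move σ ε (fun i => s.getD i ∅) s.length

theorem strategy_preSeq (n : ℕ) : S.strategy σ ε (preSeq Ks n) = S.move σ ε Ks n := by
  have hlen : (preSeq Ks n).length = n := by simp [preSeq]
  rw [strategy, hlen]
  exact S.move_congr σ ε _ fun i hi => by simp [preSeq, List.getD_eq_getElem?_getD, hi]

theorem exists_mem_netPoints (hε : ∀ n, 0 < ε n)
    (hKs : ∀ n, Ks n ∈ S.mem ∧ A.denseIn (Ks n) (S.move σ ε Ks n)) {B : Finset ℕ} {j n : ℕ}
    (hB : B.Nonempty) (hjB : ∀ m ∈ B, j ≤ m) (hBn : ∀ m ∈ B, m < n) {x : X}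
    (hx : x ∈ sysSum S.op Ks B) :
    ∃ z ∈ S.netPoints σ ε Ks n, A.tri z (S.move σ ε Ks j) ∧ dist x z ≤ ε j := by
  obtain ⟨hmem, hdense⟩ := S.sysSum_mem_denseIn hB fun m hm =>
    ⟨(hKs m).1, A.denseIn_of_lap (hKs m).2 (S.move_lap_move_of_le σ ε Ks (hjB m hm))⟩
  have htb : TotallyBounded (sysSum S.op Ks B) :=
    (S.precompact _ hmem).totallyBounded.subset subset_closure
  obtain ⟨z, hz, hxz⟩ := exists_mem_finiteNet (htb.subset fun _ hy => hy.1) hdense (hε j) hx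
  have hjn : j < n := let ⟨m, hm⟩ := hB; (hjB m hm).trans_lt (hBn m hm)
  have hBsub : B ∈ (Finset.Ico j n).powerset :=
    Finset.mem_powerset.2 fun m hm => Finset.mem_Ico.2 ⟨hjB m hm, hBn m hm⟩
  exact ⟨z, Set.mem_iUnion.2 ⟨⟨j, hjn⟩, Set.mem_iUnion₂.2 ⟨B, hBsub, hz⟩⟩,
    (finiteNet_subset hz).2, hxz⟩

variable {σ} {p : P}

theorem move_lap (hσ : ∀ s, A.lap (σ s) p) (n : ℕ) : A.lap (S.move σ ε Ks n) p :=
  A.lap_trans _ _ _ (S.move_lap_move_of_le σ ε Ks n.zero_le) (S.move_zero σ ε Ks ▸ hσ [])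

theorem move_lap_of_mem_shortLists (hσ : ∀ s, A.lap (σ s) p) {n : ℕ} {t : List X}
    (ht : t ∈ shortLists n (S.netPoints σ ε Ks n)) : A.lap (S.move σ ε Ks n) (σ t) := by
  cases n with
  | zero =>
    obtain rfl : t = [] := List.eq_nil_of_length_eq_zero (Nat.le_zero.1 ht.1)
    exact S.move_zero σ ε Ks ▸ A.lap_refl _
  | succ n =>
    rw [move_succ]
    exact A.refine_lap_of_mem (((S.netPoints_finite σ ε Ks _).shortLists _).image σ)
      (S.move_lap ε Ks hσ n) (by rintro _ ⟨t, -, rfl⟩; exact hσ t) ⟨t, ht, rfl⟩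


theorem exists_dist_le_of_isBlockSeqOf (hσ : ∀ s, A.lap (σ s) p) (hε : ∀ n, 0 < ε n)
    (hε' : Antitone ε) (hKs : ∀ n, Ks n ∈ S.mem ∧ A.denseIn (Ks n) (S.move σ ε Ks n))
    {x : ℕ → X} (hx : IsBlockSeqOf S.op Ks x) :
    ∃ z : ℕ → X, (∀ i, A.tri (z i) (σ (preSeq z i))) ∧ ∀ i, dist (x i) (z i) ≤ ε i := by
  obtain ⟨Bs, hne, hlt, hxB⟩ := hx
  set μ : ℕ → ℕ := fun i => (Bs i).min' (hne i)
  have hBμ : ∀ i, ∀ m ∈ Bs i, m < μ (i + 1) := fun i m hm => hlt i m hm _ (Finset.min'_mem _ _)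
  have hμ : StrictMono μ := strictMono_nat_of_lt_succ fun i => hBμ i _ (Finset.min'_mem _ _)
  -- `z i` is related to the move made when block `i` starts, and is collected before block
  -- `i + 1` starts, hence before every later block.
  choose z hzZ hztri hxz using fun i => S.exists_mem_netPoints σ ε Ks hε hKs (j := μ i) (hne i)
    (fun m hm => Finset.min'_le _ m hm) (hBμ i) (hxB i)
  refine ⟨z, fun i => A.mono _ _ _ (hztri i) (S.move_lap_of_mem_shortLists ε Ks hσ ⟨?_, ?_⟩),
    fun i => (hxz i).trans (hε' (hμ.id_le i))⟩
  · simpa [preSeq] using hμ.id_le i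
  · simp only [preSeq, List.mem_map, List.mem_range]
    rintro _ ⟨i', hi', rfl⟩
    exact S.netPoints_mono σ ε Ks (hμ.monotone hi') (hzZ i')

end PrecompactSystem

noncomputable def runningMin (Δ : ℕ → ℝ) (n : ℕ) : ℝ :=
  (Finset.range (n + 1)).inf' Finset.nonempty_range_add_one Δ

theorem runningMin_pos {Δ : ℕ → ℝ} (hΔ : ∀ n, 0 < Δ n) (n : ℕ) : 0 < runningMin Δ n :=
  (Finset.lt_inf'_iff _).2 fun i _ => hΔ i

theorem runningMin_le (Δ : ℕ → ℝ) (n : ℕ) : runningMin Δ n ≤ Δ n :=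
  Finset.inf'_le Δ (Finset.self_mem_range_succ n)

theorem runningMin_antitone (Δ : ℕ → ℝ) : Antitone (runningMin Δ) := fun _ _ h =>
  Finset.inf'_mono Δ (Finset.range_subset_range.2 (Nat.succ_le_succ h)) _

theorem stmt17_general {P X : Type} [MetricSpace X]
    (A : ApproxAsympSpace P X) (S : PrecompactSystem A)
    (p : P) (𝒳 : Set (ℕ → X)) (Δ : ℕ → ℝ) (hΔ : ∀ n, 0 < Δ n)
    (h : A.IStratF p 𝒳) :
    A.IStratSF S.mem p
      (fun Ks => ∀ x : ℕ → X, IsBlockSeqOf S.op Ks x → x ∈ expandSeq Δ 𝒳) := by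
  obtain ⟨σ, hσ, hσ𝒳⟩ := h
  refine ⟨S.strategy σ (runningMin Δ), fun s => S.move_lap _ _ hσ _, fun Ks hKs x hx => ?_⟩
  simp only [S.strategy_preSeq] at hKs
  obtain ⟨z, hzσ, hxz⟩ := S.exists_dist_le_of_isBlockSeqOf _ Ks hσ (runningMin_pos hΔ)
    (runningMin_antitone Δ) hKs hx
  exact ⟨z, hσ𝒳 z hzσ, fun i => (hxz i).trans (runningMin_le Δ i)⟩

theorem stmt17 {P X : Type} [Nonempty P] [MetricSpace X] [Nonempty X]
    [TopologicalSpace.SeparableSpace X]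
    (A : ApproxAsympSpace P X) (S : PrecompactSystem A)
    (p : P) (𝒳 : Set (ℕ → X)) (Δ : ℕ → ℝ) (hΔ : ∀ n, 0 < Δ n)
    (h : A.IStratF p 𝒳) :
    A.IStratSF S.mem p
      (fun Ks => ∀ x : ℕ → X, IsBlockSeqOf S.op Ks x → x ∈ expandSeq Δ 𝒳) :=
  stmt17_general A S p 𝒳 Δ hΔ h
end
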